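/- arXiv:2106.10261 — 10 statements merged into one kernel-verified Lean document; each statement's English description precedes it below -/
import Mathlib

section
/- Let C ⊆ ℝⁿ be convex compact and f differentiable. For x ∈ C, let g̃ = π_C(x - ∇f(x)) - x, where π_C denotes Euclidean projection onto C. Then ‖g̃‖² ≤ G(x), where G(x) = max_{s∈C} ⟨∇f(x), x - s⟩ is the Frank-Wolfe gap. -/
open RealInnerProductSpace

/-- The squared norm of the projected gradient is bounded by the Frank-Wolfe gap. -/
theorem stmt2 {n : ℕ} (C : Set (EuclideanSpace ℝ (Fin n)))
    (hCconv : Convex ℝ C) (hCcomp : IsCompact C)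
    (f : EuclideanSpace ℝ (Fin n) → ℝ)
    (g : EuclideanSpace ℝ (Fin n) → EuclideanSpace ℝ (Fin n))
    (hg : ∀ z, HasGradientAt f (g z) z)
    (x : EuclideanSpace ℝ (Fin n)) (hx : x ∈ C)
    (p : EuclideanSpace ℝ (Fin n)) (hp : p ∈ C)
    (hproj : ∀ y ∈ C, ⟪y - p, (x - g x) - p⟫ ≤ 0) :
    ‖p - x‖ ^ 2 ≤ sSup {r : ℝ | ∃ s ∈ C, r = ⟪g x, x - s⟫} := by
  have hset : {r : ℝ | ∃ s ∈ C, r = ⟪g x, x - s⟫} =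
      (fun s => ⟪g x, x - s⟫) '' C := by
    ext r; constructor
    · rintro ⟨s, hs, rfl⟩; exact ⟨s, hs, rfl⟩
    · rintro ⟨s, hs, rfl⟩; exact ⟨s, hs, rfl⟩
  have hcont : Continuous fun s : EuclideanSpace ℝ (Fin n) => ⟪g x, x - s⟫ :=
    (continuous_const.inner (continuous_const.sub continuous_id))
  have hbdd : BddAbove {r : ℝ | ∃ s ∈ C, r = ⟪g x, x - s⟫} := by
    rw [hset]
    exact (hCcomp.image hcont).bddAbove
  have hmem : ⟪g x, x - p⟫ ∈ {r : ℝ | ∃ s ∈ C, r = ⟪g x, x - s⟫} := ⟨p, hp, rfl⟩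
  have key : ‖p - x‖ ^ 2 ≤ ⟪g x, x - p⟫ := by
    have h := hproj x hx
    have heq : ⟪x - p, (x - g x) - p⟫ = ‖x - p‖ ^ 2 - ⟪g x, x - p⟫ := by
      have : (x - g x) - p = (x - p) - g x := by abel
      rw [this, inner_sub_right, real_inner_self_eq_norm_sq, real_inner_comm]
    have hnorm : ‖p - x‖ = ‖x - p‖ := norm_sub_rev _ _
    rw [heq] at h
    rw [hnorm]
    linarith
  exact key.trans (le_csSup hbdd hmem)
end

section
/- Let C ⊆ ℝⁿ be convex compact with diameter D, f differentiable, and x ∈ C. Then the Frank-Wolfe gap satisfies G(x) ≤ D · dist(N_C(x), -∇f(x)), where N_C(x) = {r : ⟨r, y - x⟩ ≤ 0 for all y ∈ C} is the normal cone and dist(N_C(x), g) = ‖g - π_{N_C(x)}(g)‖. -/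
open RealInnerProductSpace

/-- The FW gap is bounded by the diameter times the distance of `-∇f(x)` from the
normal cone. -/
theorem stmt3 {n : ℕ} (C : Set (EuclideanSpace ℝ (Fin n)))
    (hCconv : Convex ℝ C) (hCcomp : IsCompact C)
    (f : EuclideanSpace ℝ (Fin n) → ℝ)
    (g : EuclideanSpace ℝ (Fin n) → EuclideanSpace ℝ (Fin n))
    (hg : ∀ z, HasGradientAt f (g z) z)
    (x : EuclideanSpace ℝ (Fin n)) (hx : x ∈ C)
    (N : Set (EuclideanSpace ℝ (Fin n)))
    (hN : N = {r | ∀ y ∈ C, ⟪r, y - x⟫ ≤ 0}) :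
    sSup {r : ℝ | ∃ s ∈ C, r = ⟪g x, x - s⟫} ≤
      Metric.diam C * Metric.infDist (-(g x)) N := by
  have hN0 : (0 : EuclideanSpace ℝ (Fin n)) ∈ N := by
    rw [hN]; intro y hy; simp
  have hNclosed : IsClosed N := by
    rw [hN]
    have he : {r : EuclideanSpace ℝ (Fin n) | ∀ y ∈ C, ⟪r, y - x⟫ ≤ 0}
        = ⋂ y ∈ C, {r | ⟪r, y - x⟫ ≤ 0} := by
      ext r; simp
    rw [he]
    exact isClosed_biInter fun y _ =>
      isClosed_le (Continuous.inner continuous_id continuous_const) continuous_const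
  obtain ⟨r, hrN, hr⟩ := hNclosed.exists_infDist_eq_dist ⟨0, hN0⟩ (-(g x))
  apply Real.sSup_le
  · rintro a ⟨s, hs, rfl⟩
    have h1 : ⟪r, s - x⟫ ≤ 0 := by rw [hN] at hrN; exact hrN s hs
    have hdecomp : ⟪g x, x - s⟫ = ⟪-(g x) - r, s - x⟫ + ⟪r, s - x⟫ := by
      rw [← inner_add_left, sub_add_cancel]
      simp [inner_neg_left, inner_sub_right, real_inner_comm]
      ring
    have h2 : ⟪-(g x) - r, s - x⟫ ≤ ‖-(g x) - r‖ * ‖s - x‖ := real_inner_le_norm _ _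
    have h3 : ‖s - x‖ ≤ Metric.diam C := by
      rw [← dist_eq_norm]; exact Metric.dist_le_diam_of_mem hCcomp.isBounded hs hx
    have h4 : ‖-(g x) - r‖ = Metric.infDist (-(g x)) N := by
      rw [hr, dist_eq_norm]
    calc ⟪g x, x - s⟫ ≤ ⟪-(g x) - r, s - x⟫ := by rw [hdecomp]; linarith
      _ ≤ ‖-(g x) - r‖ * ‖s - x‖ := h2
      _ ≤ Metric.infDist (-(g x)) N * Metric.diam C := by
          apply mul_le_mul (le_of_eq h4) h3 (norm_nonneg _) Metric.infDist_nonneg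
      _ = Metric.diam C * Metric.infDist (-(g x)) N := mul_comm _ _
  · exact mul_nonneg Metric.diam_nonneg Metric.infDist_nonneg
end

section
/- Let f be convex with L-Lipschitz gradient on convex compact C, let x_k ∈ C, s_k ∈ argmin_{s∈C} ⟨∇f(x_k), s⟩, and d_k = s_k - x_k. If the full step α_k = 1 is taken (x_{k+1} = x_k + d_k, which requires G(x_k) ≥ L‖d_k‖²), then f(x_{k+1}) - f* ≤ (1/2) min{L‖d_k‖², f(x_k) - f*}. -/
open RealInnerProductSpace

section Aux

variable {n : ℕ} {f : EuclideanSpace ℝ (Fin n) → ℝ}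
  {g : EuclideanSpace ℝ (Fin n) → EuclideanSpace ℝ (Fin n)}

lemma aux_deriv (hg : ∀ z, HasGradientAt f (g z) z)
    (x v : EuclideanSpace ℝ (Fin n)) (t : ℝ) :
    HasDerivAt (fun t : ℝ => f (x + t • v)) ⟪g (x + t • v), v⟫ t := by
  have hγ : HasDerivAt (fun t : ℝ => x + t • v) v t := by
    simpa using ((hasDerivAt_id t).smul_const v).const_add x
  have := ((hg (x + t • v)).hasFDerivAt).comp_hasDerivAt t hγ
  simp [InnerProductSpace.toDual_apply_apply] at this
  exact this

/-- First-order condition for convexity. -/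
lemma aux_convex {C : Set (EuclideanSpace ℝ (Fin n))} (hCconv : Convex ℝ C)
    (hg : ∀ z, HasGradientAt f (g z) z) (hconv : ConvexOn ℝ C f)
    {x y : EuclideanSpace ℝ (Fin n)} (hx : x ∈ C) (hy : y ∈ C) :
    ⟪g x, y - x⟫ ≤ f y - f x := by
  set φ : ℝ → ℝ := fun t => f (x + t • (y - x)) with hφ
  have hder : HasDerivAt φ ⟪g x, y - x⟫ 0 := by
    simpa using aux_deriv hg x (y - x) 0
  -- slope bound from convexity
  have hslope : ∀ t ∈ Set.Ioo (0:ℝ) 1, (φ t - φ 0) / (t - 0) ≤ f y - f x := by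
    intro t ht
    have hcomb := hconv.2 hx hy (by linarith [ht.1, ht.2] : (0:ℝ) ≤ 1 - t)
      (le_of_lt ht.1) (by ring)
    have hval : φ t ≤ (1 - t) * f x + t * f y := by
      have hpt : (1 - t) • x + t • y = x + t • (y - x) := by module
      simpa [hφ, hpt, smul_eq_mul] using hcomb
    have hφ0 : φ 0 = f x := by simp [hφ]
    rw [sub_zero, div_le_iff₀ ht.1]
    nlinarith [hval, hφ0]
  have htend : Filter.Tendsto (slope φ 0) (nhdsWithin 0 (Set.Ioi 0))
      (nhds ⟪g x, y - x⟫) :=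
    (hasDerivAt_iff_tendsto_slope.1 hder).mono_left
      (nhdsWithin_mono _ (fun t ht => Set.mem_compl_singleton_iff.2 (ne_of_gt ht)))
  refine le_of_tendsto htend ?_
  filter_upwards [Ioo_mem_nhdsGT_of_mem (Set.mem_Ico.2 ⟨le_refl 0, zero_lt_one⟩)] with t ht
  simpa [slope_def_field, div_eq_inv_mul] using hslope t ht

end Aux

/-- Objective decrease after a full Frank-Wolfe step. -/
theorem stmt5 {n : ℕ} (C : Set (EuclideanSpace ℝ (Fin n)))
    (hCconv : Convex ℝ C) (hCcomp : IsCompact C)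
    (f : EuclideanSpace ℝ (Fin n) → ℝ)
    (g : EuclideanSpace ℝ (Fin n) → EuclideanSpace ℝ (Fin n))
    (hg : ∀ z, HasGradientAt f (g z) z)
    (hconv : ConvexOn ℝ C f)
    (L : ℝ) (hL : 0 < L)
    (hLip : ∀ x ∈ C, ∀ y ∈ C, ‖g x - g y‖ ≤ L * ‖x - y‖)
    (xstar : EuclideanSpace ℝ (Fin n)) (hxstar : xstar ∈ C)
    (hmin : ∀ y ∈ C, f xstar ≤ f y)
    (x s d : EuclideanSpace ℝ (Fin n)) (hx : x ∈ C) (hs : s ∈ C)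
    (hsmin : ∀ z ∈ C, ⟪g x, s⟫ ≤ ⟪g x, z⟫)
    (hd : d = s - x)
    (hfull : L * ‖d‖ ^ 2 ≤ -⟪g x, d⟫) :
    f (x + d) - f xstar ≤ (1 / 2) * min (L * ‖d‖ ^ 2) (f x - f xstar) := by
  -- membership of the segment
  have hseg : ∀ t ∈ Set.Icc (0:ℝ) 1, x + t • d ∈ C := by
    intro t ht
    have h1 : (1 - t) • x + t • s ∈ C := hCconv hx hs (by linarith [ht.2]) ht.1 (by ring)
    have : x + t • d = (1 - t) • x + t • s := by rw [hd]; module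
    rwa [this]
  -- descent lemma
  set ψ : ℝ → ℝ := fun t => f (x + t • d) - (t * ⟪g x, d⟫ + L / 2 * ‖d‖ ^ 2 * t ^ 2) with hψdef
  have hψ : ∀ t : ℝ, HasDerivAt ψ (⟪g (x + t • d), d⟫ - (⟪g x, d⟫ + L * ‖d‖ ^ 2 * t)) t := by
    intro t
    have h1 := aux_deriv hg x d t
    have h2 : HasDerivAt (fun t : ℝ => t * ⟪g x, d⟫ + L / 2 * ‖d‖ ^ 2 * t ^ 2)
        (⟪g x, d⟫ + L * ‖d‖ ^ 2 * t) t := by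
      have ha := (hasDerivAt_id t).mul_const ⟪g x, d⟫
      have hb := (hasDerivAt_pow 2 t).const_mul (L / 2 * ‖d‖ ^ 2)
      refine (ha.add hb).congr_deriv ?_
      ring
    exact h1.sub h2
  have hanti : AntitoneOn ψ (Set.Icc 0 1) := by
    apply antitoneOn_of_deriv_nonpos (convex_Icc 0 1)
    · exact fun t _ => ((hψ t).continuousAt).continuousWithinAt
    · exact fun t _ => ((hψ t).differentiableAt).differentiableWithinAt
    · intro t ht
      rw [interior_Icc] at ht
      rw [(hψ t).deriv]
      have hmem : x + t • d ∈ C := hseg t ⟨le_of_lt ht.1, le_of_lt ht.2⟩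
      have hcs : ⟪g (x + t • d) - g x, d⟫ ≤ ‖g (x + t • d) - g x‖ * ‖d‖ :=
        real_inner_le_norm _ _
      have hlip := hLip _ hmem x hx
      have hnorm : ‖x + t • d - x‖ = t * ‖d‖ := by
        simp [norm_smul, abs_of_pos ht.1]
      rw [hnorm] at hlip
      have hsub : ⟪g (x + t • d) - g x, d⟫ = ⟪g (x + t • d), d⟫ - ⟪g x, d⟫ :=
        inner_sub_left _ _ _
      nlinarith [norm_nonneg d, norm_nonneg (g (x + t • d) - g x), mul_le_mul_of_nonneg_right hlip (norm_nonneg d)]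
  have hψ10 : ψ 1 ≤ ψ 0 := hanti (Set.mem_Icc.2 ⟨le_refl 0, zero_le_one⟩)
    (Set.mem_Icc.2 ⟨zero_le_one, le_refl 1⟩) zero_le_one
  have hdesc : f (x + d) ≤ f x + ⟪g x, d⟫ + L / 2 * ‖d‖ ^ 2 := by
    have h0 : ψ 0 = f x := by simp [hψdef]
    have h1 : ψ 1 = f (x + d) - (⟪g x, d⟫ + L / 2 * ‖d‖ ^ 2) := by
      simp [hψdef]
    rw [h0, h1] at hψ10
    linarith
  -- first-order convexity bound
  have hB := aux_convex hCconv hg hconv hx hxstar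
  have hgap : f x - f xstar ≤ -⟪g x, d⟫ := by
    have h2 : ⟪g x, s⟫ ≤ ⟪g x, xstar⟫ := hsmin xstar hxstar
    have h3 : ⟪g x, xstar - x⟫ = ⟪g x, xstar⟫ - ⟪g x, x⟫ := inner_sub_right _ _ _
    have h4 : ⟪g x, d⟫ = ⟪g x, s⟫ - ⟪g x, x⟫ := by rw [hd]; exact inner_sub_right _ _ _
    linarith
  have hd2 : (0:ℝ) ≤ ‖d‖ ^ 2 := by positivity
  rcases le_total (L * ‖d‖ ^ 2) (f x - f xstar) with hc | hc
  · rw [min_eq_left hc]; nlinarith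
  · rw [min_eq_right hc]; nlinarith
end

section
/- Let f be convex with L-Lipschitz gradient on a convex compact set C with diameter D. The Frank-Wolfe method with stepsize α_k = min{-⟨∇f(x_k), d_k^{FW}⟩/(L‖d_k^{FW}‖²), 1} satisfies f(x_k) - f* ≤ 2LD²/(k+2) for every k ≥ 1. -/
open RealInnerProductSpace

variable {n : ℕ}

theorem chainFW' (f : EuclideanSpace ℝ (Fin n) → ℝ) (g : EuclideanSpace ℝ (Fin n) → EuclideanSpace ℝ (Fin n))
    (hg : ∀ z, HasGradientAt f (g z) z)
    (x d : EuclideanSpace ℝ (Fin n)) (t : ℝ) :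
    HasDerivAt (fun t : ℝ => f (x + t • d)) ⟪g (x + t • d), d⟫ t := by
  have h1 : HasDerivAt (fun t : ℝ => x + t • d) d t := by
    simpa only [one_smul] using ((hasDerivAt_id' t).smul_const d).const_add x
  have h2 := ((hg (x + t • d)).hasFDerivAt).comp_hasDerivAt t h1
  simp at h2
  exact h2

/-- descent lemma along a segment inside C -/
theorem descentFW {C : Set (EuclideanSpace ℝ (Fin n))} (hCconv : Convex ℝ C)
    (f : EuclideanSpace ℝ (Fin n) → ℝ) (g : EuclideanSpace ℝ (Fin n) → EuclideanSpace ℝ (Fin n))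
    (hg : ∀ z, HasGradientAt f (g z) z)
    {L : ℝ} (hL : 0 < L)
    (hLip : ∀ x ∈ C, ∀ y ∈ C, ‖g x - g y‖ ≤ L * ‖x - y‖)
    {a b : EuclideanSpace ℝ (Fin n)} (ha : a ∈ C) (hb : b ∈ C) :
    f b ≤ f a + ⟪g a, b - a⟫ + L / 2 * ‖b - a‖ ^ 2 := by
  set d := b - a with hd
  set φ' : ℝ → ℝ := fun t => ⟪g (a + t • d), d⟫ with hφ'
  have hmem : ∀ t ∈ Set.Icc (0:ℝ) 1, a + t • d ∈ C := fun t ht =>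
    hCconv.add_smul_sub_mem ha hb ht
  -- Lipschitz of φ' on Icc 0 1
  have hlipOn : LipschitzOnWith (L * ‖d‖ ^ 2).toNNReal φ' (Set.Icc (0:ℝ) 1) := by
    rw [lipschitzOnWith_iff_dist_le_mul]
    intro t ht t' ht'
    have h1 : dist (φ' t) (φ' t') = |⟪g (a + t • d) - g (a + t' • d), d⟫| := by
      rw [Real.dist_eq, ← inner_sub_left]
    rw [h1]
    have h2 : |⟪g (a + t • d) - g (a + t' • d), d⟫| ≤ ‖g (a + t • d) - g (a + t' • d)‖ * ‖d‖ :=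
      abs_real_inner_le_norm _ _
    have h3 : ‖g (a + t • d) - g (a + t' • d)‖ ≤ L * ‖(a + t • d) - (a + t' • d)‖ :=
      hLip _ (hmem t ht) _ (hmem t' ht')
    have h4 : ‖(a + t • d) - (a + t' • d)‖ = |t - t'| * ‖d‖ := by
      rw [show (a + t • d) - (a + t' • d) = (t - t') • d by module, norm_smul, Real.norm_eq_abs]
    have h5 : Real.toNNReal (L * ‖d‖ ^ 2) * dist t t' = L * ‖d‖ ^ 2 * |t - t'| := by
      rw [Real.dist_eq, Real.coe_toNNReal _ (by positivity)]
    rw [h5]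
    rw [h4] at h3
    calc |⟪g (a + t • d) - g (a + t' • d), d⟫| ≤ ‖g (a + t • d) - g (a + t' • d)‖ * ‖d‖ := h2
      _ ≤ (L * (|t - t'| * ‖d‖)) * ‖d‖ := by
          exact mul_le_mul_of_nonneg_right h3 (norm_nonneg d)
      _ = L * ‖d‖ ^ 2 * |t - t'| := by ring
  have hcont : ContinuousOn φ' (Set.uIcc (0:ℝ) 1) := by
    rw [Set.uIcc_of_le (by norm_num : (0:ℝ) ≤ 1)]
    exact hlipOn.continuousOn
  have hint : IntervalIntegrable φ' MeasureTheory.volume 0 1 :=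
    hcont.intervalIntegrable
  have hftc : ∫ t in (0:ℝ)..1, φ' t = f b - f a := by
    have := intervalIntegral.integral_eq_sub_of_hasDerivAt
      (f := fun t : ℝ => f (a + t • d)) (f' := φ')
      (fun t _ => chainFW' f g hg a d t) hint
    rw [this]
    norm_num [hd]
  have hbound : ∀ t ∈ Set.Icc (0:ℝ) 1, φ' t ≤ ⟪g a, d⟫ + (L * ‖d‖ ^ 2) * t := by
    intro t ht
    have h1 : φ' t - ⟪g a, d⟫ = ⟪g (a + t • d) - g a, d⟫ := by
      rw [inner_sub_left]
    have h2 : ⟪g (a + t • d) - g a, d⟫ ≤ ‖g (a + t • d) - g a‖ * ‖d‖ := real_inner_le_norm _ _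
    have h3 : ‖g (a + t • d) - g a‖ ≤ L * (t * ‖d‖) := by
      have := hLip _ (hmem t ht) _ (hmem 0 (by norm_num))
      simpa [norm_smul, Real.norm_eq_abs, abs_of_nonneg ht.1, mul_comm] using this
    nlinarith [norm_nonneg d, ht.1]
  have hintRHS : IntervalIntegrable (fun t => ⟪g a, d⟫ + (L * ‖d‖ ^ 2) * t) MeasureTheory.volume 0 1 := by
    apply IntervalIntegrable.add intervalIntegrable_const
    exact (intervalIntegral.intervalIntegrable_id).const_mul _
  have hmono : ∫ t in (0:ℝ)..1, φ' t ≤ ∫ t in (0:ℝ)..1, (⟪g a, d⟫ + (L * ‖d‖ ^ 2) * t) := by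
    apply intervalIntegral.integral_mono_on (by norm_num) hint hintRHS
    exact hbound
  have hval : ∫ t in (0:ℝ)..1, (⟪g a, d⟫ + (L * ‖d‖ ^ 2) * t) = ⟪g a, d⟫ + (L * ‖d‖ ^ 2) / 2 := by
    rw [intervalIntegral.integral_add intervalIntegrable_const
      ((intervalIntegral.intervalIntegrable_id).const_mul _),
      intervalIntegral.integral_const_mul, integral_id]
    norm_num
    ring
  rw [hftc] at hmono
  rw [hval] at hmono
  linarith

/-- first-order convexity inequality -/
theorem gradIneqFW {C : Set (EuclideanSpace ℝ (Fin n))}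
    (f : EuclideanSpace ℝ (Fin n) → ℝ) (g : EuclideanSpace ℝ (Fin n) → EuclideanSpace ℝ (Fin n))
    (hg : ∀ z, HasGradientAt f (g z) z) (hconv : ConvexOn ℝ C f)
    {a b : EuclideanSpace ℝ (Fin n)} (ha : a ∈ C) (hb : b ∈ C) :
    f a + ⟪g a, b - a⟫ ≤ f b := by
  set d := b - a with hd
  have hder : HasDerivAt (fun t : ℝ => f (a + t • d)) ⟪g a, d⟫ 0 := by
    simpa using chainFW' f g hg a d 0
  rw [hasDerivAt_iff_tendsto_slope] at hder
  have hslope : Filter.Tendsto (slope (fun t : ℝ => f (a + t • d)) 0) (nhdsWithin 0 (Set.Ioi 0)) (nhds ⟪g a, d⟫) :=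
    hder.mono_left (nhdsWithin_mono _ (fun t ht => ne_of_gt ht))
  have key : ⟪g a, d⟫ ≤ f b - f a := by
    refine le_of_tendsto hslope ?_
    filter_upwards [Ioo_mem_nhdsGT_of_mem (Set.mem_Ico.2 ⟨le_refl (0:ℝ), one_pos⟩)] with t ht
    obtain ⟨ht0, ht1⟩ := ht
    have hcvx : f (a + t • d) ≤ (1 - t) * f a + t * f b := by
      have := hconv.2 ha hb (by linarith : (0:ℝ) ≤ 1 - t) (le_of_lt ht0) (by ring)
      simpa [smul_eq_mul, hd] using this.trans_eq' (by congr 1; module)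
    rw [slope_def_field]
    simp only [zero_smul, add_zero, sub_zero]
    rw [div_le_iff₀ ht0]
    nlinarith
  linarith

/-- minimality of the clipped quadratic minimizer -/
theorem quadminFW (aa B γ : ℝ) (ha : aa ≤ 0) (hB : 0 ≤ B) (hBa : B = 0 → aa = 0)
    (h0 : 0 ≤ γ) (h1 : γ ≤ 1) :
    min (-aa / B) 1 * aa + B / 2 * (min (-aa / B) 1) ^ 2 ≤ γ * aa + B / 2 * γ ^ 2 := by
  rcases eq_or_lt_of_le hB with hB0 | hBpos
  · have haa : aa = 0 := hBa hB0.symm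
    simp [haa, ← hB0]
  · have hBne : B ≠ 0 := ne_of_gt hBpos
    rcases le_total (-aa / B) 1 with hle | hge
    · rw [min_eq_left hle]
      have key : (γ * aa + B / 2 * γ ^ 2) - ((-aa / B) * aa + B / 2 * (-aa / B) ^ 2)
          = B / 2 * (γ - (-aa / B)) ^ 2 := by
        field_simp
        ring
      nlinarith [sq_nonneg (γ - (-aa / B)), mul_pos hBpos hBpos]
    · rw [min_eq_right hge]
      have hBaa : B ≤ -aa := by
        rw [le_div_iff₀ hBpos] at hge
        linarith
      nlinarith [mul_nonneg (sub_nonneg.2 h1) (by linarith : (0:ℝ) ≤ -aa - B),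
        mul_nonneg hB (sq_nonneg (1 - γ))]

/-- `O(1/k)` convergence rate of the Frank-Wolfe method with the Lipschitz-constant
dependent stepsize, for convex objectives. -/
theorem stmt6 {n : ℕ} (C : Set (EuclideanSpace ℝ (Fin n)))
    (hCconv : Convex ℝ C) (hCcomp : IsCompact C)
    (f : EuclideanSpace ℝ (Fin n) → ℝ)
    (g : EuclideanSpace ℝ (Fin n) → EuclideanSpace ℝ (Fin n))
    (hg : ∀ z, HasGradientAt f (g z) z)
    (hconv : ConvexOn ℝ C f)
    (L : ℝ) (hL : 0 < L)
    (hLip : ∀ x ∈ C, ∀ y ∈ C, ‖g x - g y‖ ≤ L * ‖x - y‖)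
    (xstar : EuclideanSpace ℝ (Fin n)) (hxstar : xstar ∈ C)
    (hmin : ∀ y ∈ C, f xstar ≤ f y)
    (x s : ℕ → EuclideanSpace ℝ (Fin n)) (α : ℕ → ℝ)
    (hx0 : x 0 ∈ C)
    (hs : ∀ k, s k ∈ C ∧ ∀ z ∈ C, ⟪g (x k), s k⟫ ≤ ⟪g (x k), z⟫)
    (hα : ∀ k, α k = min (-⟪g (x k), s k - x k⟫ / (L * ‖s k - x k‖ ^ 2)) 1)
    (hupd : ∀ k, x (k + 1) = x k + α k • (s k - x k)) :
    ∀ k : ℕ, 1 ≤ k →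
      f (x k) - f xstar ≤ 2 * L * Metric.diam C ^ 2 / (k + 2) := by
  set D := Metric.diam C with hDdef
  have hD0 : 0 ≤ D := Metric.diam_nonneg
  -- step sizes in [0,1] and iterates in C
  have hαmem : ∀ k, x k ∈ C → 0 ≤ α k ∧ α k ≤ 1 := by
    intro k hk
    have hnum : 0 ≤ -⟪g (x k), s k - x k⟫ := by
      have := (hs k).2 (x k) hk
      rw [inner_sub_right]; linarith
    constructor
    · rw [hα k]
      exact le_min (div_nonneg hnum (by positivity)) zero_le_one
    · rw [hα k]; exact min_le_right _ _
  have hxC : ∀ k, x k ∈ C := by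
    intro k
    induction k with
    | zero => exact hx0
    | succ k ih =>
      rw [hupd k]
      exact hCconv.add_smul_sub_mem ih (hs k).1 ⟨(hαmem k ih).1, (hαmem k ih).2⟩
  have hDd : ∀ k, ‖s k - x k‖ ≤ D := by
    intro k
    rw [← dist_eq_norm]
    exact Metric.dist_le_diam_of_mem hCcomp.isBounded (hs k).1 (hxC k)
  -- gap inequality
  have hgap : ∀ k, f (x k) - f xstar ≤ -⟪g (x k), s k - x k⟫ := by
    intro k
    have h1 := gradIneqFW f g hg hconv (hxC k) hxstar
    have h2 := (hs k).2 xstar hxstar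
    rw [inner_sub_right] at *
    linarith
  -- one step recursion for any γ ∈ [0,1]
  have hrec : ∀ k : ℕ, ∀ γ : ℝ, 0 ≤ γ → γ ≤ 1 →
      f (x (k + 1)) ≤ f (x k) + γ * ⟪g (x k), s k - x k⟫
        + (L * ‖s k - x k‖ ^ 2) / 2 * γ ^ 2 := by
    intro k γ hγ0 hγ1
    have hdesc := descentFW hCconv f g hg hL hLip (hxC k) (hxC (k + 1))
    have hdiff : x (k + 1) - x k = α k • (s k - x k) := by
      rw [hupd k]; abel
    rw [hdiff] at hdesc
    rw [real_inner_smul_right] at hdesc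
    have hnorm : ‖α k • (s k - x k)‖ ^ 2 = α k ^ 2 * ‖s k - x k‖ ^ 2 := by
      rw [norm_smul, mul_pow, Real.norm_eq_abs, sq_abs]
    rw [hnorm] at hdesc
    have haa : ⟪g (x k), s k - x k⟫ ≤ 0 := by
      have := (hs k).2 (x k) (hxC k)
      rw [inner_sub_right]; linarith
    have hBa : L * ‖s k - x k‖ ^ 2 = 0 → ⟪g (x k), s k - x k⟫ = 0 := by
      intro h
      have hd0 : ‖s k - x k‖ = 0 := by
        rcases mul_eq_zero.1 h with h' | h'
        · exact absurd h' (ne_of_gt hL)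
        · exact pow_eq_zero_iff (by norm_num) |>.1 h'
      have : s k - x k = 0 := norm_eq_zero.1 hd0
      rw [this, inner_zero_right]
    have hquad := quadminFW ⟪g (x k), s k - x k⟫ (L * ‖s k - x k‖ ^ 2) γ haa
      (by positivity) hBa hγ0 hγ1
    rw [← hα k] at hquad
    nlinarith [hquad]
  -- one step recursion with γ = 2/(k+2)
  have hstep : ∀ k : ℕ,
      f (x (k + 1)) - f xstar ≤ (1 - 2 / ((k : ℝ) + 2)) * (f (x k) - f xstar)
        + (L * D ^ 2) / 2 * (2 / ((k : ℝ) + 2)) ^ 2 := by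
    intro k
    have hK2 : (0:ℝ) < (k : ℝ) + 2 := by positivity
    have hγ0 : (0:ℝ) ≤ 2 / ((k : ℝ) + 2) := by positivity
    have hγ1 : 2 / ((k : ℝ) + 2) ≤ 1 := by
      rw [div_le_one hK2]
      have : (0:ℝ) ≤ (k : ℝ) := Nat.cast_nonneg k
      linarith
    have h1 := hrec k (2 / ((k : ℝ) + 2)) hγ0 hγ1
    have h2 : 2 / ((k : ℝ) + 2) * ⟪g (x k), s k - x k⟫
        ≤ 2 / ((k : ℝ) + 2) * (-(f (x k) - f xstar)) := by
      apply mul_le_mul_of_nonneg_left _ hγ0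
      linarith [hgap k]
    have h3 : L * ‖s k - x k‖ ^ 2 ≤ L * D ^ 2 := by
      apply mul_le_mul_of_nonneg_left _ (le_of_lt hL)
      exact pow_le_pow_left₀ (norm_nonneg _) (hDd k) 2
    nlinarith [sq_nonneg (2 / ((k : ℝ) + 2))]
  -- final induction
  intro k hk
  induction k with
  | zero => omega
  | succ k ih =>
    rcases Nat.eq_zero_or_pos k with rfl | hkpos
    · -- k + 1 = 1
      have h1 := hstep 0
      norm_num at h1 ⊢
      nlinarith [mul_nonneg (le_of_lt hL) (sq_nonneg D)]
    · have ihk := ih hkpos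
      have hK1 : (1:ℝ) ≤ (k : ℝ) := by exact_mod_cast hkpos
      have hK2 : (0:ℝ) < (k : ℝ) + 2 := by linarith
      have hK3 : (0:ℝ) < (k : ℝ) + 3 := by linarith
      have hM : (0:ℝ) ≤ L * D ^ 2 := mul_nonneg (le_of_lt hL) (sq_nonneg D)
      have hhk0 : 0 ≤ f (x k) - f xstar := by
        have := hmin (x k) (hxC k)
        linarith
      have hγ1 : 2 / ((k : ℝ) + 2) ≤ 1 := by
        rw [div_le_one hK2]; linarith
      have h1 := hstep k
      have h2 : (1 - 2 / ((k : ℝ) + 2)) * (f (x k) - f xstar)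
          ≤ (1 - 2 / ((k : ℝ) + 2)) * (2 * L * D ^ 2 / ((k : ℝ) + 2)) := by
        apply mul_le_mul_of_nonneg_left ihk
        linarith
      have h3 : (1 - 2 / ((k : ℝ) + 2)) * (2 * L * D ^ 2 / ((k : ℝ) + 2))
          + (L * D ^ 2) / 2 * (2 / ((k : ℝ) + 2)) ^ 2 ≤ 2 * L * D ^ 2 / ((k : ℝ) + 3) := by
        have expand : (1 - 2 / ((k : ℝ) + 2)) * (2 * L * D ^ 2 / ((k : ℝ) + 2))
            + (L * D ^ 2) / 2 * (2 / ((k : ℝ) + 2)) ^ 2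
            = (2 * (L * D ^ 2) * ((k : ℝ) + 1)) / ((k : ℝ) + 2) ^ 2 := by
          field_simp
          ring
        rw [expand, div_le_div_iff₀ (by positivity) hK3]
        nlinarith [hM, hK1]
      have hcast : ((k + 1 : ℕ) : ℝ) + 2 = (k : ℝ) + 3 := by push_cast; ring
      rw [hcast]
      linarith
end

section
/- For the function f(x) = ‖x - (1/n)e‖² on the standard simplex Δ_{n-1} ⊂ ℝⁿ (where e is the all-ones vector), the minimum value is f* = 0, attained at x* = (1/n)e, and for every x ∈ Δ_{n-1} with at most k+1 nonzero entries, f(x) - f* ≥ 1/(k+1) - 1/n. -/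
open RealInnerProductSpace

lemma norm_sq_euclid {n : ℕ} (x : EuclideanSpace ℝ (Fin n)) :
    ‖x‖ ^ 2 = ∑ i, x i ^ 2 := by
  rw [← real_inner_self_eq_norm_sq, PiLp.inner_apply]
  simp [sq]

/-- Sparsity lower bound: on the simplex, any point with at most `k + 1` nonzero
entries has objective value at least `1/(k+1) - 1/n` for `f x = ‖x - e/n‖²`. -/
theorem stmt8 {n : ℕ} (hn : 0 < n)
    (e : EuclideanSpace ℝ (Fin n)) (he : e = WithLp.toLp 2 (fun _ => (1 : ℝ)))
    (f : EuclideanSpace ℝ (Fin n) → ℝ)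
    (hf : ∀ x, f x = ‖x - (n : ℝ)⁻¹ • e‖ ^ 2)
    (Δ : Set (EuclideanSpace ℝ (Fin n)))
    (hΔ : Δ = {x | (∀ i, 0 ≤ x i) ∧ ∑ i, x i = 1})
    (k : ℕ) (hk : k + 1 ≤ n) :
    f ((n : ℝ)⁻¹ • e) = 0 ∧ (n : ℝ)⁻¹ • e ∈ Δ ∧ (∀ x ∈ Δ, 0 ≤ f x) ∧
      ∀ x ∈ Δ, (Finset.univ.filter fun i => x i ≠ 0).card ≤ k + 1 →
        1 / (k + 1 : ℝ) - 1 / (n : ℝ) ≤ f x := by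
  have hn' : (n : ℝ) ≠ 0 := Nat.cast_ne_zero.mpr hn.ne'
  have hfx : ∀ x : EuclideanSpace ℝ (Fin n), (∑ i, x i = 1) →
      f x = (∑ i, x i ^ 2) - 1 / n := by
    intro x hx
    rw [hf, norm_sq_euclid]
    have : ∀ i : Fin n, (x - (n : ℝ)⁻¹ • e) i = x i - (n : ℝ)⁻¹ := by
      intro i; simp [he, PiLp.sub_apply, PiLp.smul_apply]
    simp only [this]
    have : ∑ i, (x i - (n : ℝ)⁻¹) ^ 2
        = ∑ i, (x i ^ 2 - 2 * (n : ℝ)⁻¹ * x i + (n : ℝ)⁻¹ ^ 2) := by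
      congr 1; funext i; ring
    rw [this, Finset.sum_add_distrib, Finset.sum_sub_distrib, ← Finset.mul_sum, hx]
    simp [Finset.card_univ]
    field_simp
    ring
  refine ⟨?_, ?_, ?_, ?_⟩
  · rw [hf]; simp
  · rw [hΔ]
    constructor
    · intro i; simp [he]
    · simp [he, Finset.card_univ, hn']
  · intro x hx; rw [hf]; positivity
  · intro x hx hcard
    rw [hΔ] at hx
    obtain ⟨hpos, hsum⟩ := hx
    rw [hfx x hsum]
    have key : (1 : ℝ) / (k + 1) ≤ ∑ i, x i ^ 2 := by
      set s := Finset.univ.filter fun i => x i ≠ 0 with hs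
      have hsum' : ∑ i ∈ s, x i = 1 := by
        rw [← hsum]
        exact Finset.sum_filter_ne_zero Finset.univ
      have h1 : (1 : ℝ) ≤ (s.card : ℝ) * ∑ i ∈ s, x i ^ 2 := by
        have := sq_sum_le_card_mul_sum_sq (s := s) (f := fun i => x i)
        rw [hsum'] at this; simpa using this
      have h2 : ∑ i ∈ s, x i ^ 2 ≤ ∑ i, x i ^ 2 :=
        Finset.sum_le_sum_of_subset_of_nonneg (Finset.filter_subset _ _)
          (fun i _ _ => sq_nonneg _)
      have hcard' : (s.card : ℝ) ≤ (k + 1 : ℝ) := by exact_mod_cast hcard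
      have hsq : 0 ≤ ∑ i ∈ s, x i ^ 2 :=
        Finset.sum_nonneg fun i _ => sq_nonneg _
      have h3 : (1 : ℝ) ≤ (k + 1 : ℝ) * ∑ i, x i ^ 2 :=
        h1.trans (mul_le_mul hcard' h2 hsq (by positivity))
      rw [div_le_iff₀ (by positivity)] at *
      linarith [h3]
    have : (1 : ℝ) / (k+1) ≤ ∑ i, x i ^ 2 := key
    linarith
end

section
/- Let w ∈ ℝⁿ with w_{j_1} ≥ w_{j_2} ≥ ... ≥ w_{j_n} (a decreasing ordering) and let r : 2^{[n]} → ℝ be submodular with r(∅) = 0. Define s by s_{j_k} = r({j_1,...,j_k}) - r({j_1,...,j_{k-1}}). Then s lies in the base polytope B(r) = {s ∈ ℝⁿ : Σ_{a∈A} s_a ≤ r(A) for all A ⊆ [n], Σ_{a∈[n]} s_a = r([n])}, and s ∈ argmax_{x ∈ B(r)} ⟨w, x⟩. -/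
/-- Edmonds' greedy algorithm: the greedy vector lies in the base polytope of a
submodular function and maximizes `⟨w, ·⟩` over it. -/
theorem stmt10 {n : ℕ} (r : Finset (Fin n) → ℝ)
    (hsub : ∀ A B : Finset (Fin n), r (A ∪ B) + r (A ∩ B) ≤ r A + r B)
    (hempty : r ∅ = 0)
    (w : Fin n → ℝ) (j : Equiv.Perm (Fin n))
    (hord : ∀ a b : Fin n, a ≤ b → w (j b) ≤ w (j a))
    (S : ℕ → Finset (Fin n))
    (hS : ∀ m, S m = Finset.univ.filter fun i => ((j.symm i : ℕ) < m))
    (s : Fin n → ℝ)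
    (hs : ∀ k : Fin n, s (j k) = r (S ((k : ℕ) + 1)) - r (S (k : ℕ)))
    (B : Set (Fin n → ℝ))
    (hB : B = {x | (∀ A : Finset (Fin n), ∑ a ∈ A, x a ≤ r A) ∧
        ∑ a, x a = r Finset.univ}) :
    s ∈ B ∧ ∀ x ∈ B, ∑ i, w i * x i ≤ ∑ i, w i * s i := by
  -- basic facts about S
  have hS0 : S 0 = ∅ := by rw [hS]; ext i; simp
  have hSn : ∀ m, n ≤ m → S m = Finset.univ := by
    intro m hm; rw [hS]; ext i; simp
    exact lt_of_lt_of_le (j.symm i).isLt hm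
  have hnot : ∀ k : Fin n, j k ∉ S (k : ℕ) := by
    intro k; rw [hS]; simp
  have hins : ∀ k : Fin n, S ((k : ℕ) + 1) = insert (j k) (S (k : ℕ)) := by
    intro k; ext i
    rw [hS, hS, Finset.mem_insert]
    simp only [Finset.mem_filter, Finset.mem_univ, true_and]
    constructor
    · intro h
      rcases Nat.lt_succ_iff_lt_or_eq.mp h with h | h
      · right; exact h
      · left
        have : j.symm i = k := Fin.ext h
        rw [← this]; simp
    · rintro (h | h)
      · rw [h]; simp
      · exact Nat.lt_succ_of_lt h
  -- telescoping: sum of s over S m equals r (S m)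
  have hTs : ∀ m, ∑ a ∈ S m, s a = r (S m) := by
    intro m
    induction m with
    | zero => rw [hS0, hempty]; simp
    | succ m ih =>
      by_cases h : m < n
      · have hk : (((⟨m, h⟩ : Fin n) : ℕ)) = m := rfl
        have h1 : ∑ a ∈ S (m + 1), s a = s (j ⟨m, h⟩) + ∑ a ∈ S m, s a := by
          have := hins ⟨m, h⟩
          rw [hk] at this
          rw [this, Finset.sum_insert (by have := hnot ⟨m, h⟩; rwa [hk] at this)]
        have h2 := hs ⟨m, h⟩
        rw [hk] at h2
        rw [h1, h2, ih]; ring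
      · have h1 : S (m + 1) = S m := by
          rw [hSn (m+1) (by omega), hSn m (by omega)]
        rw [h1]; exact ih
  -- membership part 1: ∑_{a ∈ A} s a ≤ r A
  have hineq : ∀ A : Finset (Fin n), ∑ a ∈ A, s a ≤ r A := by
    intro A
    have key : ∀ m, ∑ a ∈ A ∩ S m, s a ≤ r (A ∩ S m) := by
      intro m
      induction m with
      | zero => rw [hS0]; simp [hempty]
      | succ m ih =>
        by_cases h : m < n
        · have hk : (((⟨m, h⟩ : Fin n) : ℕ)) = m := rfl
          have hinsm : S (m + 1) = insert (j ⟨m, h⟩) (S m) := by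
            have := hins ⟨m, h⟩; rwa [hk] at this
          have hni : j ⟨m, h⟩ ∉ S m := by
            have := hnot ⟨m, h⟩; rwa [hk] at this
          by_cases hiA : j ⟨m, h⟩ ∈ A
          · have h2 : A ∩ S (m + 1) = insert (j ⟨m, h⟩) (A ∩ S m) := by
              rw [hinsm]; ext a
              simp only [Finset.mem_inter, Finset.mem_insert]
              constructor
              · rintro ⟨h4, h5 | h5⟩
                · exact Or.inl h5
                · exact Or.inr ⟨h4, h5⟩
              · rintro (h4 | h4)
                · exact ⟨h4 ▸ hiA, Or.inl h4⟩
                · exact ⟨h4.1, Or.inr h4.2⟩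
            have h3 : j ⟨m, h⟩ ∉ A ∩ S m := by
              simp only [Finset.mem_inter]; tauto
            have hu : (A ∩ S (m + 1)) ∪ S m = S (m + 1) := by
              rw [h2, hinsm]; ext a
              simp only [Finset.mem_union, Finset.mem_insert, Finset.mem_inter]
              constructor
              · rintro ((h4 | h4) | h4)
                · exact Or.inl h4
                · exact Or.inr h4.2
                · exact Or.inr h4
              · rintro (h4 | h4)
                · exact Or.inl (Or.inl h4)
                · exact Or.inr h4
            have hi2 : (A ∩ S (m + 1)) ∩ S m = A ∩ S m := by
              rw [h2]; ext a
              simp only [Finset.mem_inter, Finset.mem_insert]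
              constructor
              · rintro ⟨h4 | h4, h5⟩
                · exact absurd (h4 ▸ h5) hni
                · exact ⟨h4.1, h5⟩
              · tauto
            have hsub' := hsub (A ∩ S (m + 1)) (S m)
            rw [hu, hi2] at hsub'
            have h5 : ∑ a ∈ A ∩ S (m + 1), s a
                = s (j ⟨m, h⟩) + ∑ a ∈ A ∩ S m, s a := by
              rw [h2, Finset.sum_insert h3]
            have h6 := hs ⟨m, h⟩
            rw [hk] at h6
            rw [h5, h6]
            linarith
          · have h2 : A ∩ S (m + 1) = A ∩ S m := by
              rw [hinsm]; ext a
              simp only [Finset.mem_inter, Finset.mem_insert]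
              constructor
              · rintro ⟨h4, h5 | h5⟩
                · exact absurd (h5 ▸ h4) hiA
                · exact ⟨h4, h5⟩
              · tauto
            rw [h2]; exact ih
        · have h1 : S (m + 1) = S m := by
            rw [hSn (m+1) (by omega), hSn m (by omega)]
          rw [h1]; exact ih
    have := key n
    rwa [hSn n le_rfl, Finset.inter_univ] at this
  have hsum : ∑ a, s a = r Finset.univ := by
    have := hTs n
    rwa [hSn n le_rfl] at this
  have hsB : s ∈ B := by rw [hB]; exact ⟨hineq, hsum⟩
  refine ⟨hsB, ?_⟩
  -- Abel summation identity
  have abel : ∀ x : Fin n → ℝ, ∀ m,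
      ∑ k ∈ Finset.range m,
        (if h : k < n then w (j ⟨k, h⟩) * x (j ⟨k, h⟩) else 0)
      = ∑ k ∈ Finset.range m,
          ((if h : k < n then w (j ⟨k, h⟩) else 0)
            - (if h : k + 1 < n then w (j ⟨k + 1, h⟩) else 0))
          * (∑ a ∈ S (k + 1), x a)
        + (if h : m < n then w (j ⟨m, h⟩) else 0) * (∑ a ∈ S m, x a) := by
    intro x m
    induction m with
    | zero => simp [hS0]
    | succ m ih =>
      rw [Finset.sum_range_succ, Finset.sum_range_succ, ih]
      by_cases h : m < n
      · have hk : (((⟨m, h⟩ : Fin n) : ℕ)) = m := rfl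
        have hinsm : S (m + 1) = insert (j ⟨m, h⟩) (S m) := by
          have := hins ⟨m, h⟩; rwa [hk] at this
        have hni : j ⟨m, h⟩ ∉ S m := by
          have := hnot ⟨m, h⟩; rwa [hk] at this
        have hx : ∑ a ∈ S (m + 1), x a = x (j ⟨m, h⟩) + ∑ a ∈ S m, x a := by
          rw [hinsm, Finset.sum_insert hni]
        rw [dif_pos h, dif_pos h, hx]
        ring
      · have h1 : S (m + 1) = S m := by
          rw [hSn (m+1) (by omega), hSn m (by omega)]
        have h2 : ¬ (m + 1 < n) := by omega
        simp only [dif_neg h, dif_neg h2, h1]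
        ring
  -- rewrite ∑ i, w i * x i via the Abel identity
  have repr : ∀ x : Fin n → ℝ,
      ∑ i, w i * x i
      = ∑ k ∈ Finset.range n,
          ((if h : k < n then w (j ⟨k, h⟩) else 0)
            - (if h : k + 1 < n then w (j ⟨k + 1, h⟩) else 0))
          * (∑ a ∈ S (k + 1), x a) := by
    intro x
    have h1 : ∑ i, w i * x i = ∑ k : Fin n, w (j k) * x (j k) :=
      (Equiv.sum_comp j (fun i => w i * x i)).symm
    have h2 : ∑ k : Fin n, w (j k) * x (j k)
        = ∑ k ∈ Finset.range n,
            (if h : k < n then w (j ⟨k, h⟩) * x (j ⟨k, h⟩) else 0) := by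
      rw [← Fin.sum_univ_eq_sum_range
        (fun k => if h : k < n then w (j ⟨k, h⟩) * x (j ⟨k, h⟩) else 0)]
      apply Finset.sum_congr rfl
      intro k _
      rw [dif_pos k.isLt]
    have h3 := abel x n
    rw [dif_neg (lt_irrefl n)] at h3
    rw [h1, h2, h3]; ring
  intro x hx
  rw [hB] at hx
  obtain ⟨hx1, hx2⟩ := hx
  rw [repr x, repr s]
  apply Finset.sum_le_sum
  intro k hk
  have hkn : k < n := Finset.mem_range.mp hk
  rw [dif_pos hkn]
  by_cases h : k + 1 < n
  · rw [dif_pos h]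
    have hcoef : 0 ≤ w (j ⟨k, hkn⟩) - w (j ⟨k + 1, h⟩) := by
      have := hord ⟨k, hkn⟩ ⟨k + 1, h⟩ (by simp [Fin.le_def])
      linarith
    have hTx : ∑ a ∈ S (k + 1), x a ≤ r (S (k + 1)) := hx1 (S (k + 1))
    have := hTs (k + 1)
    apply mul_le_mul_of_nonneg_left _ hcoef
    rw [this]; exact hTx
  · have hn : k + 1 = n := by omega
    rw [dif_neg h]
    have hu : S (k + 1) = Finset.univ := hSn (k + 1) (by omega)
    have e1 : ∑ a ∈ S (k + 1), x a = ∑ a ∈ S (k + 1), s a := by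
      rw [hu, hx2, ← hsum]
    rw [e1]
end

section
/- Let f be μ-strongly convex with L-Lipschitz gradient on convex compact C, x* = argmin_C f, and suppose at step k a descent direction d_k satisfies the angle condition ⟨-∇f(x_k), d_k/‖d_k‖⟩ ≥ (τ/‖x_k - x*‖)⟨∇f(x_k), x_k - x*⟩ for some τ > 0, and the stepsize α_k = -⟨∇f(x_k), d_k⟩/(L‖d_k‖²) is feasible (α_k < α_k^max). Then h_{k+1} ≤ (1 - τ²μ/L) h_k, where h_k = f(x_k) - f(x*). -/
open RealInnerProductSpace

lemma descent_aux {n : ℕ} (C : Set (EuclideanSpace ℝ (Fin n)))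
    (hCconv : Convex ℝ C)
    (f : EuclideanSpace ℝ (Fin n) → ℝ)
    (g : EuclideanSpace ℝ (Fin n) → EuclideanSpace ℝ (Fin n))
    (hg : ∀ z, HasGradientAt f (g z) z)
    (L : ℝ) (hL : 0 < L)
    (hLip : ∀ x ∈ C, ∀ y ∈ C, ‖g x - g y‖ ≤ L * ‖x - y‖)
    (x y : EuclideanSpace ℝ (Fin n)) (hx : x ∈ C) (hy : y ∈ C) :
    f y ≤ f x + ⟪g x, y - x⟫ + L / 2 * ‖y - x‖ ^ 2 := by
  set v := y - x with hv
  have hmem : ∀ t ∈ Set.Icc (0:ℝ) 1, x + t • v ∈ C := by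
    intro t ht
    have := hCconv hx hy (by linarith [ht.1, ht.2] : (0:ℝ) ≤ 1 - t) ht.1 (by ring)
    convert this using 1
    simp only [hv]
    module
  have hφ : ∀ t : ℝ, HasDerivAt (fun t : ℝ => f (x + t • v)) ⟪g (x + t • v), v⟫ t := by
    intro t
    have h1 : HasDerivAt (fun t : ℝ => x + t • v) v t := by
      simpa using ((hasDerivAt_id t).smul_const v).const_add x
    have h2 := (hg (x + t • v)).hasFDerivAt.comp_hasDerivAt t h1
    simp at h2
    exact h2
  set ψ : ℝ → ℝ := fun t => f (x + t • v) - t * ⟪g x, v⟫ - L / 2 * t ^ 2 * ‖v‖ ^ 2 with hψ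
  have hψ' : ∀ t : ℝ, HasDerivAt ψ (⟪g (x + t • v), v⟫ - ⟪g x, v⟫ - L * t * ‖v‖ ^ 2) t := by
    intro t
    have h1 : HasDerivAt (fun t : ℝ => t * ⟪g x, v⟫) ⟪g x, v⟫ t := by
      simpa using (hasDerivAt_id t).mul_const ⟪g x, v⟫
    have h2 : HasDerivAt (fun t : ℝ => L / 2 * t ^ 2 * ‖v‖ ^ 2) (L * t * ‖v‖ ^ 2) t := by
      have := ((hasDerivAt_pow 2 t).const_mul (L / 2)).mul_const (‖v‖ ^ 2)
      exact this.congr_deriv (by ring)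
    have h3 := ((hφ t).sub h1).sub h2
    exact h3
  have hanti : AntitoneOn ψ (Set.Icc 0 1) := by
    apply antitoneOn_of_deriv_nonpos (convex_Icc 0 1)
    · exact fun t _ => ((hψ' t).continuousAt).continuousWithinAt
    · exact fun t ht => ((hψ' t).differentiableAt).differentiableWithinAt
    · intro t ht
      rw [interior_Icc] at ht
      rw [(hψ' t).deriv]
      have hmemt : x + t • v ∈ C := hmem t ⟨le_of_lt ht.1, le_of_lt ht.2⟩
      have hb : ⟪g (x + t • v) - g x, v⟫ ≤ L * t * ‖v‖ ^ 2 := by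
        calc ⟪g (x + t • v) - g x, v⟫ ≤ ‖g (x + t • v) - g x‖ * ‖v‖ :=
              real_inner_le_norm _ _
          _ ≤ (L * ‖(x + t • v) - x‖) * ‖v‖ := by
              gcongr; exact hLip _ hmemt _ hx
          _ = L * (|t| * ‖v‖) * ‖v‖ := by
              congr 2; simp [norm_smul]
          _ = L * t * ‖v‖ ^ 2 := by
              rw [abs_of_pos ht.1]; ring
      have heq := inner_sub_left (𝕜 := ℝ) (g (x + t • v)) (g x) v
      linarith [heq.le, heq.ge]
  have h10 : ψ 1 ≤ ψ 0 :=
    hanti (Set.left_mem_Icc.2 zero_le_one) (Set.right_mem_Icc.2 zero_le_one) zero_le_one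
  have e1 : x + (1:ℝ) • v = y := by simp [hv]
  have e0 : x + (0:ℝ) • v = x := by simp
  simp only [hψ, e0, e1, one_mul, zero_mul, one_pow, mul_zero, sub_zero, mul_one,
    ne_eq, OfNat.ofNat_ne_zero, not_false_eq_true, zero_pow] at h10
  linarith

/-- Linear decrease of the optimality gap under the angle condition. -/
theorem stmt13 {n : ℕ} (C : Set (EuclideanSpace ℝ (Fin n)))
    (hCconv : Convex ℝ C) (hCcomp : IsCompact C)
    (f : EuclideanSpace ℝ (Fin n) → ℝ)
    (g : EuclideanSpace ℝ (Fin n) → EuclideanSpace ℝ (Fin n))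
    (hg : ∀ z, HasGradientAt f (g z) z)
    (μ L : ℝ) (hμ : 0 < μ) (hL : 0 < L)
    (hLip : ∀ x ∈ C, ∀ y ∈ C, ‖g x - g y‖ ≤ L * ‖x - y‖)
    (hsc : ∀ x ∈ C, ∀ y ∈ C,
      f x + ⟪g x, y - x⟫ + μ / 2 * ‖x - y‖ ^ 2 ≤ f y)
    (xstar : EuclideanSpace ℝ (Fin n)) (hxstar : xstar ∈ C)
    (hmin : ∀ y ∈ C, f xstar ≤ f y)
    (x d : EuclideanSpace ℝ (Fin n)) (hx : x ∈ C)
    (hxne : x ≠ xstar) (hdne : d ≠ 0)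
    (τ : ℝ) (hτ : 0 < τ)
    (hangle : τ / ‖x - xstar‖ * ⟪g x, x - xstar⟫ ≤ ⟪-(g x), ‖d‖⁻¹ • d⟫)
    (α : ℝ) (hα : α = -⟪g x, d⟫ / (L * ‖d‖ ^ 2))
    (hfeas : x + α • d ∈ C) :
    f (x + α • d) - f xstar ≤ (1 - τ ^ 2 * μ / L) * (f x - f xstar) := by
  set r : ℝ := ‖x - xstar‖ with hr
  set nd : ℝ := ‖d‖ with hnd
  set s : ℝ := ⟪g x, x - xstar⟫ with hs
  set G : ℝ := ⟪g x, d⟫ with hG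
  have hrpos : 0 < r := by
    rw [hr, norm_pos_iff]; exact sub_ne_zero.2 hxne
  have hndpos : 0 < nd := by rw [hnd, norm_pos_iff]; exact hdne
  -- strong convexity at x, xstar
  have hsc1 : f x + ⟪g x, xstar - x⟫ + μ / 2 * ‖x - xstar‖ ^ 2 ≤ f xstar :=
    hsc x hx xstar hxstar
  have hinner : ⟪g x, xstar - x⟫ = -s := by
    rw [hs, ← inner_neg_right]; congr 1; abel
  have hkey : f x - f xstar ≤ s - μ / 2 * r ^ 2 := by
    rw [hinner] at hsc1; linarith
  have hh0 : 0 ≤ f x - f xstar := by linarith [hmin x hx]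
  have hspos : 0 < s := by nlinarith [mul_pos hμ (pow_pos hrpos 2)]
  -- gap bound: h ≤ s^2 / (2 μ r^2)
  have hgap : f x - f xstar ≤ s ^ 2 / (2 * μ * r ^ 2) := by
    have h1 : 0 ≤ (s - μ * r ^ 2) ^ 2 := sq_nonneg _
    have h2 : s - μ / 2 * r ^ 2 ≤ s ^ 2 / (2 * μ * r ^ 2) := by
      rw [le_div_iff₀ (by positivity)]
      nlinarith
    linarith
  -- angle condition: -G/nd ≥ τ s / r
  have hangle' : τ * s / r ≤ -G / nd := by
    have : ⟪-(g x), ‖d‖⁻¹ • d⟫ = -G / nd := by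
      rw [inner_neg_left, real_inner_smul_right]
      field_simp [hG]
      rw [hG, hnd]; ring
    rw [this] at hangle
    calc τ * s / r = τ / r * s := by ring
      _ ≤ -G / nd := hangle
  -- descent
  have hdesc := descent_aux C hCconv f g hg L hL hLip x (x + α • d) hx hfeas
  have hsub : (x + α • d) - x = α • d := by abel
  rw [hsub] at hdesc
  have hin : ⟪g x, α • d⟫ = α * G := real_inner_smul_right _ _ _
  have hnorm : ‖α • d‖ ^ 2 = α ^ 2 * nd ^ 2 := by
    rw [norm_smul, mul_pow, Real.norm_eq_abs, sq_abs]
  rw [hin, hnorm] at hdesc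
  have hαval : α = -G / (L * nd ^ 2) := by rw [hα, hG, hnd]
  have hdesc2 : f (x + α • d) ≤ f x - G ^ 2 / (2 * L * nd ^ 2) := by
    have key : α * G + L / 2 * (α ^ 2 * nd ^ 2) = -(G ^ 2 / (2 * L * nd ^ 2)) := by
      rw [hαval]
      field_simp
      ring
    linarith
  -- G^2 / nd^2 ≥ τ^2 s^2 / r^2
  have hG2 : τ ^ 2 * s ^ 2 / r ^ 2 ≤ G ^ 2 / nd ^ 2 := by
    have h1 : 0 ≤ τ * s / r := by positivity
    have h2 : (τ * s / r) ^ 2 ≤ (-G / nd) ^ 2 := pow_le_pow_left₀ h1 hangle' 2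
    calc τ ^ 2 * s ^ 2 / r ^ 2 = (τ * s / r) ^ 2 := by ring
      _ ≤ (-G / nd) ^ 2 := h2
      _ = G ^ 2 / nd ^ 2 := by ring
  -- combine
  have hfinal : G ^ 2 / (2 * L * nd ^ 2) ≥ τ ^ 2 * μ / L * (f x - f xstar) := by
    have h1 : τ ^ 2 * μ / L * (f x - f xstar) ≤ τ ^ 2 * μ / L * (s ^ 2 / (2 * μ * r ^ 2)) := by
      apply mul_le_mul_of_nonneg_left hgap (by positivity)
    have h2 : τ ^ 2 * μ / L * (s ^ 2 / (2 * μ * r ^ 2)) = τ ^ 2 * s ^ 2 / r ^ 2 / (2 * L) := by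
      field_simp
    have h3 : τ ^ 2 * s ^ 2 / r ^ 2 / (2 * L) ≤ G ^ 2 / nd ^ 2 / (2 * L) := by
      gcongr
    have h4 : G ^ 2 / nd ^ 2 / (2 * L) = G ^ 2 / (2 * L * nd ^ 2) := by
      ring
    linarith
  have : (1 - τ ^ 2 * μ / L) * (f x - f xstar)
      = (f x - f xstar) - τ ^ 2 * μ / L * (f x - f xstar) := by ring
  linarith
end

section
/- Let f be convex and differentiable on convex compact C ⊆ ℝⁿ with diameter D, let x* be a minimizer lying in the interior of C with δ = dist(x*, ∂C) > 0, and let x ∈ C with ∇f(x) ≠ 0. Let d^{FW} = s - x with s ∈ argmin_{y∈C}⟨∇f(x), y⟩. Then ⟨-∇f(x), d^{FW}/‖d^{FW}‖⟩ ≥ (δ/D)‖∇f(x)‖ ≥ (δ/D)⟨-∇f(x), (x* - x)/‖x* - x‖⟩ (interpreting the last quantity as 0 if x = x*). -/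
open RealInnerProductSpace

/-- Angle condition for the FW direction when the minimizer is interior. -/
theorem stmt14 {n : ℕ} (C : Set (EuclideanSpace ℝ (Fin n)))
    (hCconv : Convex ℝ C) (hCcomp : IsCompact C)
    (f : EuclideanSpace ℝ (Fin n) → ℝ)
    (g : EuclideanSpace ℝ (Fin n) → EuclideanSpace ℝ (Fin n))
    (hg : ∀ z, HasGradientAt f (g z) z)
    (hconv : ConvexOn ℝ C f)
    (xstar : EuclideanSpace ℝ (Fin n)) (hxstarC : xstar ∈ interior C)
    (hmin : ∀ y ∈ C, f xstar ≤ f y)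
    (δ : ℝ) (hδ : δ = Metric.infDist xstar (frontier C)) (hδpos : 0 < δ)
    (x : EuclideanSpace ℝ (Fin n)) (hx : x ∈ C) (hgx : g x ≠ 0)
    (s : EuclideanSpace ℝ (Fin n)) (hsC : s ∈ C)
    (hsmin : ∀ y ∈ C, ⟪g x, s⟫ ≤ ⟪g x, y⟫)
    (d : EuclideanSpace ℝ (Fin n)) (hd : d = s - x) :
    δ / Metric.diam C * ⟪-(g x), ‖x - xstar‖⁻¹ • (x - xstar)⟫ ≤
        δ / Metric.diam C * ‖g x‖ ∧
      δ / Metric.diam C * ‖g x‖ ≤ ⟪-(g x), ‖d‖⁻¹ • d⟫ := by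
  have hCclosed : IsClosed C := hCcomp.isClosed
  have hDnn : 0 ≤ Metric.diam C := Metric.diam_nonneg
  have hcoef : 0 ≤ δ / Metric.diam C := div_nonneg hδpos.le hDnn
  -- the ball of radius δ around xstar is contained in C
  have hball : Metric.ball xstar δ ⊆ C := by
    have h1 : Metric.ball xstar δ ⊆ (frontier C)ᶜ := by
      rw [hδ]; exact Metric.ball_infDist_subset_compl
    have h2 : (frontier C)ᶜ = interior C ∪ (closure C)ᶜ := by
      ext z
      simp only [Set.mem_compl_iff, frontier, Set.mem_diff, Set.mem_union, not_and, not_not]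
      constructor
      · intro h
        by_cases hz : z ∈ closure C
        · exact Or.inl (h hz)
        · exact Or.inr hz
      · rintro (h | h)
        · intro _; exact h
        · intro hz; exact absurd hz h
    have h3 : Metric.ball xstar δ ⊆ interior C := by
      refine (convex_ball xstar δ).isPreconnected.subset_left_of_subset_union
        isOpen_interior (isClosed_closure.isOpen_compl) ?_ (h2 ▸ h1) ?_
      · exact Set.disjoint_left.2 fun z hz1 hz2 =>
          hz2 (subset_closure (interior_subset hz1))
      · exact ⟨xstar, Metric.mem_ball_self hδpos, hxstarC⟩
    exact h3.trans interior_subset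
  have hcball : Metric.closedBall xstar δ ⊆ C := by
    rw [← closure_ball xstar hδpos.ne']
    exact hCclosed.closure_subset_iff.2 hball
  -- gradient inequality: ⟪g x, x - xstar⟫ ≥ 0
  have hgrad : 0 ≤ ⟪g x, x - xstar⟫ := by
    set v := xstar - x with hv
    set q : ℝ → ℝ := fun t => f (x + t • v) with hq
    have hline : HasDerivAt (fun t : ℝ => x + t • v) v 0 := by
      simpa using ((hasDerivAt_id (0:ℝ)).smul_const v).const_add x
    have hqd : HasDerivAt q ⟪g x, v⟫ 0 := by
      have hF := (hg x).hasFDerivAt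
      rw [show x = x + (0:ℝ) • v by simp] at hF
      have hcomp := hF.comp_hasDerivAt 0 hline
      simpa [q, Function.comp_def] using hcomp
    have hslope : ∀ t ∈ Set.Ioc (0:ℝ) 1, slope q 0 t ≤ 0 := by
      intro t ht
      have hfle : f (x + t • v) ≤ (1 - t) * f x + t * f xstar := by
        have h := hconv.2 hx (interior_subset hxstarC)
          (by linarith [ht.2] : (0:ℝ) ≤ 1 - t) ht.1.le (by ring)
        have he : x + t • v = (1 - t) • x + t • xstar := by
          rw [hv]; module
        rw [he]; simpa [smul_eq_mul] using h
      have hqt : q t - q 0 ≤ 0 := by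
        have h0 : q 0 = f x := by simp [q]
        have h1 : q t = f (x + t • v) := rfl
        nlinarith [hmin x hx, ht.1.le, ht.2, hfle]
      rw [slope_def_field]
      exact div_nonpos_of_nonpos_of_nonneg hqt (by linarith [ht.1])
    have htend : Filter.Tendsto (slope q 0) (nhdsWithin 0 (Set.Ioi 0)) (nhds ⟪g x, v⟫) :=
      (hasDerivAt_iff_tendsto_slope.1 hqd).mono_left
        (nhdsWithin_mono 0 fun t ht => ne_of_gt ht)
    have hle : ⟪g x, v⟫ ≤ 0 := by
      refine le_of_tendsto htend ?_
      filter_upwards [Ioc_mem_nhdsGT_of_mem (by norm_num : (0:ℝ) ∈ Set.Ico (0:ℝ) 1)]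
        with t ht using hslope t ht
    have : ⟪g x, x - xstar⟫ = -⟪g x, v⟫ := by
      rw [hv, ← inner_neg_right]; congr 1; abel
    linarith [this ▸ neg_nonneg.2 hle]
  -- the test point y0
  set y0 : EuclideanSpace ℝ (Fin n) := xstar - (δ / ‖g x‖) • g x with hy0
  have hgxnorm : 0 < ‖g x‖ := norm_pos_iff.2 hgx
  have hy0C : y0 ∈ C := by
    apply hcball
    rw [Metric.mem_closedBall, dist_eq_norm]
    have : y0 - xstar = -((δ / ‖g x‖) • g x) := by rw [hy0]; abel
    rw [this, norm_neg, norm_smul, Real.norm_eq_abs, abs_of_nonneg (by positivity)]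
    rw [div_mul_cancel₀ _ hgxnorm.ne']
  -- key inequality
  have hkey : δ * ‖g x‖ ≤ ⟪-(g x), d⟫ := by
    have h1 : ⟪g x, s⟫ ≤ ⟪g x, y0⟫ := hsmin y0 hy0C
    have h2 : ⟪g x, y0⟫ = ⟪g x, xstar⟫ - δ * ‖g x‖ := by
      rw [hy0, inner_sub_right, inner_smul_right, real_inner_self_eq_norm_sq]
      field_simp
    have h3 : ⟪-(g x), d⟫ = ⟪g x, x⟫ - ⟪g x, s⟫ := by
      rw [hd, inner_neg_left, inner_sub_right]; ring
    have h4 : ⟪g x, x - xstar⟫ = ⟪g x, x⟫ - ⟪g x, xstar⟫ := inner_sub_right _ _ _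
    linarith
  have hdpos : 0 < ‖d‖ := by
    rcases eq_or_ne d 0 with h | h
    · exfalso
      rw [h, inner_zero_right] at hkey
      nlinarith
    · exact norm_pos_iff.2 h
  have hdD : ‖d‖ ≤ Metric.diam C := by
    have := Metric.dist_le_diam_of_mem hCcomp.isBounded hsC hx
    rwa [dist_eq_norm, ← hd] at this
  have hDpos : 0 < Metric.diam C := lt_of_lt_of_le hdpos hdD
  constructor
  · apply mul_le_mul_of_nonneg_left _ hcoef
    calc ⟪-(g x), ‖x - xstar‖⁻¹ • (x - xstar)⟫
        ≤ ‖-(g x)‖ * ‖‖x - xstar‖⁻¹ • (x - xstar)‖ := real_inner_le_norm _ _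
      _ ≤ ‖g x‖ * 1 := by
          rw [norm_neg]
          apply mul_le_mul_of_nonneg_left _ (norm_nonneg _)
          rw [norm_smul, Real.norm_eq_abs, abs_inv, abs_norm]
          rcases eq_or_ne (x - xstar) 0 with h | h
          · simp [h]
          · rw [inv_mul_cancel₀ (norm_ne_zero_iff.2 h)]
      _ = ‖g x‖ := mul_one _
  · rw [real_inner_smul_right]
    calc δ / Metric.diam C * ‖g x‖ = δ * ‖g x‖ / Metric.diam C := by ring
      _ ≤ ⟪-(g x), d⟫ / Metric.diam C := by
          gcongr
      _ ≤ ⟪-(g x), d⟫ / ‖d‖ := by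
          apply div_le_div_of_nonneg_left _ hdpos hdD
          nlinarith [hkey, mul_pos hδpos hgxnorm]
      _ = ‖d‖⁻¹ * ⟪-(g x), d⟫ := by rw [div_eq_inv_mul]
end

section
/- Let f be μ-strongly convex with L-Lipschitz gradient on convex compact C with diameter D, and suppose the minimizer x* lies in the relative interior of C with dist(x*, ∂C) = δ > 0. Then the Frank-Wolfe method with stepsize α_k = min{-⟨∇f(x_k), d_k⟩/(L‖d_k‖²), 1} converges linearly: f(x_k) - f* ≤ (1 - (μ/L)(δ/D)²)^k (f(x_0) - f*). -/
open RealInnerProductSpace Metric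

private lemma fw_descent {n : ℕ} {C : Set (EuclideanSpace ℝ (Fin n))} (hCconv : Convex ℝ C)
    {f : EuclideanSpace ℝ (Fin n) → ℝ} {g : EuclideanSpace ℝ (Fin n) → EuclideanSpace ℝ (Fin n)}
    (hg : ∀ z, HasGradientAt f (g z) z) {L : ℝ}
    (hLip : ∀ x ∈ C, ∀ y ∈ C, ‖g x - g y‖ ≤ L * ‖x - y‖)
    {x y : EuclideanSpace ℝ (Fin n)} (hx : x ∈ C) (hy : y ∈ C) :
    f y ≤ f x + ⟪g x, y - x⟫ + L / 2 * ‖y - x‖ ^ 2 := by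
  set d := y - x with hd
  set φ : ℝ → ℝ := fun t => f (x + t • d) - t * ⟪g x, d⟫ - L * t ^ 2 / 2 * ‖d‖ ^ 2 with hφ
  have hline : ∀ t : ℝ, t ∈ Set.Icc (0:ℝ) 1 → x + t • d ∈ C := by
    intro t ht
    have := hCconv hx hy (by linarith [ht.1, ht.2] : (0:ℝ) ≤ 1 - t) ht.1 (by ring)
    convert this using 1
    simp [hd]
    module
  have hderiv : ∀ t : ℝ, HasDerivAt φ (⟪g (x + t • d), d⟫ - ⟪g x, d⟫ - L * t * ‖d‖ ^ 2) t := by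
    intro t
    have h1 : HasDerivAt (fun t : ℝ => x + t • d) d t := by
      simpa using ((hasDerivAt_id t).smul_const d).const_add x
    have h2 : HasDerivAt (fun t : ℝ => f (x + t • d)) ⟪g (x + t • d), d⟫ t := by
      have := (hg (x + t • d)).hasFDerivAt.comp_hasDerivAt t h1
      exact this
    have h3 : HasDerivAt (fun t : ℝ => t * ⟪g x, d⟫) ⟪g x, d⟫ t := by
      simpa using (hasDerivAt_id t).mul_const ⟪g x, d⟫
    have h4 : HasDerivAt (fun t : ℝ => L * t ^ 2 / 2 * ‖d‖ ^ 2) (L * t * ‖d‖ ^ 2) t := by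
      have : HasDerivAt (fun t : ℝ => t ^ 2) (2 * t) t := by
        simpa using hasDerivAt_pow 2 t
      have := ((this.const_mul L).div_const 2).mul_const (‖d‖ ^ 2)
      rw [show L * t * ‖d‖ ^ 2 = L * (2 * t) / 2 * ‖d‖ ^ 2 by ring]; exact this
    exact (h2.sub h3).sub h4
  have hanti : AntitoneOn φ (Set.Icc 0 1) := by
    apply antitoneOn_of_deriv_nonpos (convex_Icc 0 1)
    · exact fun t _ => (hderiv t).differentiableAt.continuousAt.continuousWithinAt
    · exact fun t _ => (hderiv t).differentiableAt.differentiableWithinAt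
    · intro t ht
      rw [interior_Icc] at ht
      rw [(hderiv t).deriv]
      have hmem : x + t • d ∈ C := hline t ⟨le_of_lt ht.1, le_of_lt ht.2⟩
      have h5 : ⟪g (x + t • d) - g x, d⟫ ≤ ‖g (x + t • d) - g x‖ * ‖d‖ := real_inner_le_norm _ _
      have h6 : ‖g (x + t • d) - g x‖ ≤ L * ‖x + t • d - x‖ := hLip _ hmem _ hx
      have h7 : ‖x + t • d - x‖ = t * ‖d‖ := by
        simp [norm_smul, abs_of_pos ht.1]
      have h9 := inner_sub_left (𝕜 := ℝ) (g (x + t • d)) (g x) d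
      rw [h7] at h6
      have h8 : L * (t * ‖d‖) * ‖d‖ = L * t * ‖d‖ ^ 2 := by ring
      have h10 := mul_le_mul_of_nonneg_right h6 (norm_nonneg d)
      linarith
  have h10 : φ 1 ≤ φ 0 :=
    hanti (Set.left_mem_Icc.2 one_pos.le) (Set.right_mem_Icc.2 one_pos.le) one_pos.le
  have e1 : x + (1:ℝ) • d = y := by simp [hd]
  have e0 : x + (0:ℝ) • d = x := by simp
  simp only [hφ, e1, e0] at h10
  linarith [h10]

set_option maxHeartbeats 2000000 in
/-- Linear convergence of the Frank-Wolfe method when the minimizer of a strongly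
convex objective lies in the interior of the feasible set. -/
theorem stmt15 {n : ℕ} (C : Set (EuclideanSpace ℝ (Fin n)))
    (hCconv : Convex ℝ C) (hCcomp : IsCompact C)
    (f : EuclideanSpace ℝ (Fin n) → ℝ)
    (g : EuclideanSpace ℝ (Fin n) → EuclideanSpace ℝ (Fin n))
    (hg : ∀ z, HasGradientAt f (g z) z)
    (μ L : ℝ) (hμ : 0 < μ) (hL : 0 < L)
    (hLip : ∀ x ∈ C, ∀ y ∈ C, ‖g x - g y‖ ≤ L * ‖x - y‖)
    (hsc : ∀ x ∈ C, ∀ y ∈ C,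
      f x + ⟪g x, y - x⟫ + μ / 2 * ‖x - y‖ ^ 2 ≤ f y)
    (xstar : EuclideanSpace ℝ (Fin n)) (hxstarC : xstar ∈ interior C)
    (hmin : ∀ y ∈ C, f xstar ≤ f y)
    (δ : ℝ) (hδ : δ = Metric.infDist xstar (frontier C)) (hδpos : 0 < δ)
    (x s : ℕ → EuclideanSpace ℝ (Fin n)) (α : ℕ → ℝ)
    (hx0 : x 0 ∈ C)
    (hs : ∀ k, s k ∈ C ∧ ∀ z ∈ C, ⟪g (x k), s k⟫ ≤ ⟪g (x k), z⟫)
    (hα : ∀ k, α k = min (-⟪g (x k), s k - x k⟫ / (L * ‖s k - x k‖ ^ 2)) 1)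
    (hupd : ∀ k, x (k + 1) = x k + α k • (s k - x k)) :
    ∀ k : ℕ, f (x k) - f xstar ≤
      (1 - μ / L * (δ / Metric.diam C) ^ 2) ^ k * (f (x 0) - f xstar) := by
  have hCclosed : IsClosed C := hCcomp.isClosed
  have hxsC : xstar ∈ C := interior_subset hxstarC
  -- frontier C is nonempty
  have hfr : (frontier C).Nonempty := by
    by_contra h
    rw [Set.not_nonempty_iff_eq_empty] at h
    rw [hδ, h, Metric.infDist_empty] at hδpos
    exact lt_irrefl 0 hδpos
  -- every frontier point is at distance ≥ δ
  have hfar : ∀ y ∈ frontier C, δ ≤ dist xstar y := fun y hy =>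
    hδ ▸ Metric.infDist_le_dist_of_mem hy
  -- the open ball around xstar is inside C
  have hballC : ball xstar δ ⊆ C := by
    have hsub : ball xstar δ ⊆ interior C := by
      apply IsPreconnected.subset_left_of_subset_union isOpen_interior
        (isOpen_compl_iff.2 isClosed_closure)
      · exact Set.disjoint_left.2 fun a ha hac =>
          hac (subset_closure (interior_subset ha))
      · intro z hz
        by_cases h1 : z ∈ interior C
        · exact Or.inl h1
        · refine Or.inr fun hcl => ?_
          have hzf : z ∈ frontier C := ⟨hcl, h1⟩
          have := hfar z hzf
          rw [mem_ball, dist_comm] at hz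
          linarith
      · exact ⟨xstar, mem_ball_self hδpos, hxstarC⟩
      · exact (convex_ball xstar δ).isPreconnected
    exact hsub.trans interior_subset
  -- the closed ball is inside C
  have hcballC : closedBall xstar δ ⊆ C := by
    rw [← closure_ball xstar hδpos.ne']
    exact (IsClosed.closure_subset_iff hCclosed).2 hballC
  -- nontriviality: get a unit vector
  obtain ⟨y₀, hy₀⟩ := hfr
  have hy₀ne : y₀ ≠ xstar := by
    intro h
    have := hfar y₀ hy₀
    rw [h, dist_self] at this
    linarith
  set u : EuclideanSpace ℝ (Fin n) := ‖y₀ - xstar‖⁻¹ • (y₀ - xstar) with hu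
  have hy₀sub : y₀ - xstar ≠ 0 := sub_ne_zero.2 hy₀ne
  have hunorm : ‖u‖ = 1 := norm_smul_inv_norm hy₀sub
  -- diameter bounds
  set D := Metric.diam C with hD
  have hmemp : xstar + δ • u ∈ C := by
    apply hcballC
    rw [mem_closedBall, dist_eq_norm]
    simp [norm_smul, hunorm, abs_of_pos hδpos]
  have hmemm : xstar - δ • u ∈ C := by
    apply hcballC
    rw [mem_closedBall, dist_eq_norm]
    simp [norm_smul, hunorm, abs_of_pos hδpos]
  have h2δD : 2 * δ ≤ D := by
    have := Metric.dist_le_diam_of_mem hCcomp.isBounded hmemp hmemm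
    rw [dist_eq_norm] at this
    have he : (xstar + δ • u) - (xstar - δ • u) = (2 * δ) • u := by module
    rw [he, norm_smul, hunorm, Real.norm_eq_abs] at this
    rw [abs_of_pos (by linarith : (0:ℝ) < 2 * δ)] at this
    simpa using this
  have hDpos : 0 < D := by linarith
  -- μ ≤ L
  have hμL : μ ≤ L := by
    set p := xstar + δ • u with hp
    have hδnorm : ‖xstar - p‖ = δ := by
      have : xstar - p = (-δ) • u := by rw [hp]; module
      rw [this, norm_smul, hunorm]
      simp [abs_of_pos hδpos]
    have h1 := hsc xstar hxsC p hmemp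
    have h2 := hsc p hmemp xstar hxsC
    have hpn : ‖p - xstar‖ = δ := by rw [norm_sub_rev]; exact hδnorm
    have hi1 : ⟪g xstar, p - xstar⟫ + ⟪g p, xstar - p⟫ = -⟪g p - g xstar, p - xstar⟫ := by
      rw [inner_sub_left]
      rw [show xstar - p = -(p - xstar) from by abel, inner_neg_right]
      ring
    have hi2 : ⟪g p - g xstar, p - xstar⟫ ≤ ‖g p - g xstar‖ * δ := by
      have := real_inner_le_norm (g p - g xstar) (p - xstar)
      rwa [hpn] at this
    have hi3 : ‖g p - g xstar‖ ≤ L * δ := by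
      have := hLip _ hmemp _ hxsC
      rwa [hpn] at this
    rw [hδnorm] at h1
    rw [hpn] at h2
    have hsq : (0:ℝ) < δ ^ 2 := by positivity
    apply le_of_mul_le_mul_right _ hsq
    linarith [h1, h2, hi1, hi2, mul_le_mul_of_nonneg_right hi3 hδpos.le]
  -- the contraction factor
  set ρ := μ / L * (δ / D) ^ 2 with hρ
  have hρpos : 0 < ρ := by rw [hρ]; positivity
  have hρhalf : ρ ≤ 1 / 2 := by
    have hδD : δ / D ≤ 1 / 2 := by
      rw [div_le_div_iff₀ hDpos (by norm_num)]
      linarith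
    have hμL' : μ / L ≤ 1 := (div_le_one hL).2 hμL
    have h1 : (δ / D) ^ 2 ≤ (1/2) ^ 2 := by
      apply pow_le_pow_left₀ (by positivity) hδD
    calc ρ ≤ 1 * (1/2)^2 := by
            apply mul_le_mul hμL' h1 (by positivity) (by norm_num)
      _ ≤ 1/2 := by norm_num
  have hρD : ρ * (L * D ^ 2) = μ * δ ^ 2 := by
    rw [hρ]; field_simp
  have hDC : Metric.diam C = D := hD.symm
  clear_value D
  clear_value ρ
  -- main induction
  have key : ∀ k : ℕ, x k ∈ C ∧ f (x k) - f xstar ≤ (1 - ρ) ^ k * (f (x 0) - f xstar) := by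
    intro k
    induction k with
    | zero => exact ⟨hx0, by simp⟩
    | succ k ih =>
      obtain ⟨hxkC, hineq⟩ := ih
      obtain ⟨hskC, hsmin⟩ := hs k
      have hupdk := hupd k
      have hαk := hα k
      set xk := x k with hxk
      set sk := s k with hsk
      set d := sk - xk with hdd
      set G := -⟪g xk, d⟫ with hG
      set N := ‖d‖ ^ 2 with hN
      have hNnn : 0 ≤ N := by rw [hN]; positivity
      clear_value N
      clear_value G
      clear_value d
      clear_value sk
      clear_value xk
      have hG0 : 0 ≤ G := by
        have := hsmin xk hxkC
        rw [hG, hdd, inner_sub_right]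
        linarith
      have hα0 : 0 ≤ α k := by
        rw [hαk]
        exact le_min (div_nonneg hG0 (mul_nonneg hL.le hNnn)) one_pos.le
      have hα1 : α k ≤ 1 := by rw [hαk]; exact min_le_right _ _
      have hx1C : x (k + 1) ∈ C := by
        rw [hupdk, hdd]
        have := hCconv hxkC hskC (by linarith : (0:ℝ) ≤ 1 - α k) hα0 (by ring)
        convert this using 1
        module
      refine ⟨hx1C, ?_⟩
      -- basic facts
      have hhk0 : 0 ≤ f xk - f xstar := by linarith [hmin xk hxkC]
      have hhk1 : 0 ≤ f (x (k+1)) - f xstar := by linarith [hmin _ hx1C]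
      -- PL inequality
      have hPL : 2 * μ * (f xk - f xstar) ≤ ‖g xk‖ ^ 2 := by
        have h1 := hsc xk hxkC xstar hxsC
        have h2 : ⟪g xk, xstar - xk⟫ ≥ -(‖g xk‖ * ‖xstar - xk‖) := by
          have h2a := real_inner_le_norm (g xk) (xk - xstar)
          have hin : (⟪g xk, xstar - xk⟫ : ℝ) = -⟪g xk, xk - xstar⟫ := by
            rw [show xstar - xk = -(xk - xstar) from by abel, inner_neg_right]
          rw [norm_sub_rev] at h2a
          linarith
        rw [norm_sub_rev xk xstar] at h1
        have e1 : f xk - f xstar ≤ ‖g xk‖ * ‖xstar - xk‖ - μ / 2 * ‖xstar - xk‖ ^ 2 := by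
          linarith
        have e2 := mul_le_mul_of_nonneg_left e1 (by linarith : (0:ℝ) ≤ 2 * μ)
        linarith [e2, sq_nonneg (‖g xk‖ - μ * ‖xstar - xk‖)]
      -- gap lower bounds
      have hconv : f xk - f xstar ≤ ⟪g xk, xk - xstar⟫ := by
        have h1 := hsc xk hxkC xstar hxsC
        have he : ⟪g xk, xstar - xk⟫ = -⟪g xk, xk - xstar⟫ := by
          rw [show xstar - xk = -(xk - xstar) by abel, inner_neg_right]
        rw [he] at h1
        linarith [mul_nonneg hμ.le (sq_nonneg ‖xk - xstar‖)]
      have hGhk : f xk - f xstar ≤ G := by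
        have h1 := hsmin xstar hxsC
        rw [hG, hdd, inner_sub_right]
        have : ⟪g xk, xk - xstar⟫ = ⟪g xk, xk⟫ - ⟪g xk, xstar⟫ := inner_sub_right _ _ _
        linarith [hconv, this]
      have hgap : δ * ‖g xk‖ ≤ G := by
        by_cases hgz : g xk = 0
        · rw [hgz]; simpa using hG0
        · have hgn : 0 < ‖g xk‖ := norm_pos_iff.2 hgz
          set z := xstar - (δ * ‖g xk‖⁻¹) • g xk with hz
          have hzC : z ∈ C := by
            apply hcballC
            rw [mem_closedBall, dist_eq_norm, hz]
            have : xstar - (δ * ‖g xk‖⁻¹) • g xk - xstar = -((δ * ‖g xk‖⁻¹) • g xk) := by abel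
            rw [this, norm_neg, norm_smul, Real.norm_eq_abs]
            rw [abs_of_pos (by positivity : (0:ℝ) < δ * ‖g xk‖⁻¹)]
            rw [mul_assoc, inv_mul_cancel₀ hgn.ne']
            simp
          have h1 := hsmin z hzC
          have h2 : ⟪g xk, z⟫ = ⟪g xk, xstar⟫ - δ * ‖g xk‖ := by
            rw [hz, inner_sub_right, inner_smul_right, real_inner_self_eq_norm_sq]
            field_simp
          rw [h2] at h1
          have h3 : ⟪g xk, xk - xstar⟫ = ⟪g xk, xk⟫ - ⟪g xk, xstar⟫ := inner_sub_right _ _ _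
          rw [hG, hdd, inner_sub_right]
          linarith [hconv, hhk0]
      -- N ≤ D ^ 2
      have hND : N ≤ D ^ 2 := by
        have h1 := Metric.dist_le_diam_of_mem hCcomp.isBounded hskC hxkC
        rw [dist_eq_norm, hDC] at h1
        rw [hN, hdd]
        linarith [mul_self_le_mul_self (norm_nonneg (sk - xk)) h1, sq_nonneg ‖sk - xk‖]
      -- descent step
      have hdesc : f (x (k+1)) ≤ f xk + (α k) * ⟪g xk, d⟫ + L / 2 * (α k)^2 * N := by
        have h1 := fw_descent hCconv hg hLip hxkC hx1C
        have he : x (k+1) - xk = α k • d := by rw [hupdk]; abel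
        rw [he, inner_smul_right, norm_smul] at h1
        have : (‖α k‖ * ‖d‖) ^ 2 = (α k)^2 * N := by
          rw [hN, Real.norm_eq_abs, mul_pow, sq_abs]
        rw [this] at h1
        linarith
      -- case analysis
      by_cases hN0 : N = 0
      · -- d = 0, nothing moves, and f xk = f xstar
        have hd0 : d = (0 : EuclideanSpace ℝ (Fin n)) := by
          have h1 : ‖d‖ ^ 2 = 0 := by rw [← hN, hN0]
          rwa [pow_eq_zero_iff (two_ne_zero), norm_eq_zero] at h1
        have hx1 : x (k+1) = xk := by rw [hupdk, hd0]; simp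
        have hGz : G = 0 := by rw [hG, hd0]; simp
        have hgz : ‖g xk‖ = 0 := by
          have h2 : δ * ‖g xk‖ ≤ δ * 0 := by rw [hGz] at hgap; linarith [hgap]
          exact le_antisymm (le_of_mul_le_mul_left h2 hδpos) (norm_nonneg (g xk))
        have hhk : f xk - f xstar = 0 := by
          have h3 : ‖g xk‖ ^ 2 = 0 := by rw [hgz]; ring
          have h4 : 2 * μ * (f xk - f xstar) ≤ 2 * μ * 0 := by linarith [hPL]
          have h5 : f xk - f xstar ≤ 0 :=
            le_of_mul_le_mul_left h4 (by linarith : (0:ℝ) < 2 * μ)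
          linarith
        rw [hx1, hhk]
        have : (0:ℝ) ≤ (1 - ρ) ^ (k+1) * (f (x 0) - f xstar) := by
          apply mul_nonneg (pow_nonneg (by linarith) _)
          linarith [hmin (x 0) hx0]
        linarith
      · have hNpos : 0 < N := lt_of_le_of_ne hNnn (Ne.symm hN0)
        have hstep : f (x (k+1)) - f xstar ≤ (1 - ρ) * (f xk - f xstar) := by
          by_cases hcase : G ≤ L * N
          · -- α = G / (L * N)
            have hαeq : α k = G / (L * N) := by
              rw [hαk]
              exact min_eq_left ((div_le_one (mul_pos hL hNpos)).2 hcase)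
            have hval : (α k) * ⟪g xk, d⟫ + L / 2 * (α k)^2 * N = -(G^2 / (2 * L * N)) := by
              rw [hαeq, hG]
              field_simp [hL.ne', hNpos.ne']
              ring
            have hdec : f (x (k+1)) ≤ f xk - G^2 / (2 * L * N) := by
              linarith [hdesc, hval]
            have hg2 : δ^2 * ‖g xk‖^2 ≤ G^2 := by
              linarith [mul_self_le_mul_self (mul_nonneg hδpos.le (norm_nonneg (g xk))) hgap]
            have hkey : ρ * (f xk - f xstar) ≤ G^2 / (2 * L * N) := by
              rw [le_div_iff₀ (mul_pos (mul_pos two_pos hL) hNpos)]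
              have c1 : ρ * (f xk - f xstar) * (2 * L * N) ≤
                  ρ * (f xk - f xstar) * (2 * L * D^2) := by
                linarith [mul_le_mul_of_nonneg_left hND
                  (mul_nonneg (mul_nonneg hρpos.le hhk0) (by linarith : (0:ℝ) ≤ 2 * L))]
              have c2 : ρ * (f xk - f xstar) * (2 * L * D^2) =
                  δ^2 * (2 * μ * (f xk - f xstar)) := by
                rw [show ρ * (f xk - f xstar) * (2 * L * D^2)
                    = 2 * (f xk - f xstar) * (ρ * (L * D^2)) from by ring, hρD]
                ring
              have c4 : δ^2 * (2 * μ * (f xk - f xstar)) ≤ δ^2 * ‖g xk‖^2 :=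
                mul_le_mul_of_nonneg_left hPL (sq_nonneg δ)
              linarith [c1, c2, c4, hg2]
            linarith
          · -- α = 1
            push_neg at hcase
            have hαeq : α k = 1 := by
              rw [hαk]
              apply min_eq_right
              rw [le_div_iff₀ (mul_pos hL hNpos)]
              linarith
            have hdec : f (x (k+1)) ≤ f xk - G + L / 2 * N := by
              rw [hαeq] at hdesc
              have hGe : (⟪g xk, d⟫ : ℝ) = -G := by rw [hG]; ring
              rw [hGe] at hdesc
              linarith [hdesc]
            have h1 : f (x (k+1)) ≤ f xk - G / 2 := by linarith
            have h2 : f (x (k+1)) - f xstar ≤ (f xk - f xstar) / 2 := by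
              linarith [hGhk]
            linarith [mul_nonneg (by linarith : (0:ℝ) ≤ 1/2 - ρ) hhk0]
        calc f (x (k+1)) - f xstar ≤ (1 - ρ) * (f xk - f xstar) := hstep
          _ ≤ (1 - ρ) * ((1 - ρ) ^ k * (f (x 0) - f xstar)) := by
              apply mul_le_mul_of_nonneg_left hineq (by linarith)
          _ = (1 - ρ) ^ (k+1) * (f (x 0) - f xstar) := by ring
  intro k
  exact (key k).2
end

section
/- For the hypercube vertex set A = {0,1}ⁿ, the pyramidal width PWidth(A) = min_{F ∈ faces(conv A), F ∩ A ≠ A} dist(F, conv(A \ F)) satisfies PWidth(A) = 1/√n. -/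
open scoped RealInnerProductSpace


theorem sum_apply' {n : ℕ} (f : Fin n → EuclideanSpace ℝ (Fin n)) (j : Fin n) :
    (∑ i, f i) j = ∑ i, f i j := by simp

theorem repr' {n : ℕ} (l : EuclideanSpace ℝ (Fin n) →L[ℝ] ℝ)
    (x : EuclideanSpace ℝ (Fin n)) :
    l x = ∑ i, x i * l (EuclideanSpace.single i 1) := by
  have hx : x = ∑ i, x i • EuclideanSpace.single i (1:ℝ) := by
    ext j
    rw [sum_apply']
    simp [EuclideanSpace.single_apply]
  conv_lhs => rw [hx]
  simp

theorem box_mem {n : ℕ} (A : Set (EuclideanSpace ℝ (Fin n)))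
    (hA : A = {x | ∀ i, x i = 0 ∨ x i = 1}) :
    ∀ x ∈ convexHull ℝ A, ∀ i, 0 ≤ x i ∧ x i ≤ 1 := by
  have hconv : Convex ℝ {x : EuclideanSpace ℝ (Fin n) | ∀ i, 0 ≤ x i ∧ x i ≤ 1} := by
    intro x hx y hy a b ha hb hab
    intro i
    have h1 : (a • x + b • y) i = a * x i + b * y i := by simp
    rw [h1]
    obtain ⟨hx0, hx1⟩ := hx i
    obtain ⟨hy0, hy1⟩ := hy i
    constructor <;> nlinarith
  intro x hx
  have : convexHull ℝ A ⊆ {x : EuclideanSpace ℝ (Fin n) | ∀ i, 0 ≤ x i ∧ x i ≤ 1} := by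
    apply convexHull_min _ hconv
    intro a ha i
    rw [hA] at ha
    rcases ha i with h | h <;> simp [h]
  exact this hx

/-- halfspace convexity -/
theorem halfspace_convex {n : ℕ} (w : Fin n → ℝ) (t : ℝ) :
    Convex ℝ {x : EuclideanSpace ℝ (Fin n) | t ≤ ∑ i, w i * x i} := by
  intro x hx y hy a b ha hb hab
  simp only [Set.mem_setOf_eq] at *
  have h1 : ∀ i, w i * (a • x + b • y) i = a * (w i * x i) + b * (w i * y i) := by
    intro i; simp; ring
  have h2 : ∑ i, w i * (a • x + b • y) i = a * (∑ i, w i * x i) + b * (∑ i, w i * y i) := by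
    simp only [h1, Finset.sum_add_distrib, Finset.mul_sum]
  rw [h2]
  have ht : a * t + b * t = t := by linear_combination t * hab
  nlinarith [mul_le_mul_of_nonneg_left hx ha, mul_le_mul_of_nonneg_left hy hb]

theorem key {n : ℕ} (A C F : Set (EuclideanSpace ℝ (Fin n)))
    (hA : A = {x | ∀ i, x i = 0 ∨ x i = 1})
    (hC : C = convexHull ℝ A)
    (hF : IsExposed ℝ C F) (hne : F.Nonempty) (hFC : F ≠ C) :
    (A \ F).Nonempty ∧
      ∀ u ∈ F, ∀ v ∈ convexHull ℝ (A \ F), 1 / Real.sqrt n ≤ dist u v := by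
  obtain ⟨l, hFl⟩ := hF hne
  set c : Fin n → ℝ := fun i => l (EuclideanSpace.single i 1) with hc
  have hlx : ∀ x : EuclideanSpace ℝ (Fin n), l x = ∑ i, x i * c i := fun x => repr' l x
  have hC01 : ∀ x ∈ C, ∀ i, 0 ≤ x i ∧ x i ≤ 1 := by
    rw [hC]; exact box_mem A hA
  -- the maximizing vertex
  set m : EuclideanSpace ℝ (Fin n) :=
    (WithLp.equiv 2 _).symm (fun i => if 0 < c i then (1:ℝ) else 0) with hm
  have hmval : ∀ i, m i = if 0 < c i then (1:ℝ) else 0 := fun i => rfl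
  have hmA : m ∈ A := by
    rw [hA]; intro i; rw [hmval]; split <;> simp
  have hmC : m ∈ C := by rw [hC]; exact subset_convexHull ℝ A hmA
  have hterm : ∀ x ∈ C, ∀ i, x i * c i ≤ m i * c i := by
    intro x hx i
    obtain ⟨h0, h1⟩ := hC01 x hx i
    rw [hmval]
    by_cases h : 0 < c i
    · rw [if_pos h]; nlinarith
    · rw [if_neg h]; push_neg at h; nlinarith
  have hmax : ∀ x ∈ C, l x ≤ l m := by
    intro x hx
    rw [hlx, hlx]
    exact Finset.sum_le_sum (fun i _ => hterm x hx i)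
  have hmF : m ∈ F := by rw [hFl]; exact ⟨hmC, hmax⟩
  have hFsub : F ⊆ C := by rw [hFl]; exact Set.sep_subset _ _
  -- each element of F has the same extreme coordinates
  have hFcoord : ∀ u ∈ F, ∀ i, u i * c i = m i * c i := by
    intro u hu
    have huC : u ∈ C := hFsub hu
    have h1 : l m ≤ l u := by
      rw [hFl] at hu; exact hu.2 m hmC
    have h2 : l u = l m := le_antisymm (hmax u huC) h1
    rw [hlx, hlx] at h2
    intro i
    exact (Finset.sum_eq_sum_iff_of_le (fun i _ => hterm u huC i)).1 h2 i (Finset.mem_univ i)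
  have hF1 : ∀ u ∈ F, ∀ i, 0 < c i → u i = 1 := by
    intro u hu i hi
    have := hFcoord u hu i
    rw [hmval, if_pos hi, one_mul] at this
    have hci : c i ≠ 0 := ne_of_gt hi
    field_simp at this
    tauto
  have hF0 : ∀ u ∈ F, ∀ i, c i < 0 → u i = 0 := by
    intro u hu i hi
    have := hFcoord u hu i
    rw [hmval, if_neg (by linarith), zero_mul] at this
    rcases mul_eq_zero.1 this with h | h
    · exact h
    · exact absurd h (ne_of_lt hi)
  -- some coordinate is active
  have hi0 : ∃ i, c i ≠ 0 := by
    by_contra h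
    push_neg at h
    apply hFC
    rw [hFl]
    ext x
    simp only [Set.mem_setOf_eq]
    constructor
    · exact fun hx => hx.1
    · intro hx
      refine ⟨hx, fun y hy => ?_⟩
      rw [hlx, hlx]
      simp [h]
  obtain ⟨i0, hi0⟩ := hi0
  -- flipped vertex
  set a0 : EuclideanSpace ℝ (Fin n) :=
    (WithLp.equiv 2 _).symm (fun i => if i = i0 then 1 - m i else m i) with ha0
  have ha0val : ∀ i, a0 i = if i = i0 then 1 - m i else m i := fun i => rfl
  have ha0A : a0 ∈ A := by
    rw [hA]; intro i; rw [ha0val, hmval]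
    split <;> split <;> simp
  have ha0F : a0 ∉ F := by
    intro hFa
    rcases lt_or_gt_of_ne hi0 with h | h
    · have := hF0 a0 hFa i0 h
      rw [ha0val, if_pos rfl, hmval, if_neg (by linarith)] at this
      norm_num at this
    · have := hF1 a0 hFa i0 h
      rw [ha0val, if_pos rfl, hmval, if_pos h] at this
      norm_num at this
  refine ⟨⟨a0, ha0A, ha0F⟩, ?_⟩
  -- the separating functional
  set w : Fin n → ℝ := fun i => if 0 < c i then (-1:ℝ) else if c i < 0 then 1 else 0 with hw
  set g : EuclideanSpace ℝ (Fin n) → ℝ := fun x => ∑ i, w i * x i with hg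
  -- g u = g m for u ∈ F
  have hgF : ∀ u ∈ F, g u = g m := by
    intro u hu
    apply Finset.sum_congr rfl
    intro i _
    by_cases h1 : 0 < c i
    · rw [hF1 u hu i h1, hmval, if_pos h1]
    · by_cases h2 : c i < 0
      · rw [hF0 u hu i h2, hmval, if_neg h1]
      · simp [hw, h1, h2]
  -- g a ≥ g m + 1 for a ∈ A \ F
  have hgA : ∀ a ∈ A \ F, g m + 1 ≤ g a := by
    intro a ⟨haA, haF⟩
    have haC : a ∈ C := by rw [hC]; exact subset_convexHull ℝ A haA
    -- a is not a maximizer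
    have hlt : l a < l m := by
      rw [hFl] at haF
      simp only [Set.mem_setOf_eq, not_and, not_forall] at haF
      obtain ⟨y, hy, hlt⟩ := haF haC
      push_neg at hlt
      exact lt_of_lt_of_le hlt (hmax y hy)
    -- some coordinate differs
    have hex : ∃ i, a i * c i < m i * c i := by
      by_contra h
      push_neg at h
      have : l m ≤ l a := by
        rw [hlx, hlx]; exact Finset.sum_le_sum (fun i _ => h i)
      linarith
    obtain ⟨i, hi⟩ := hex
    have ha01 : ∀ j, a j = 0 ∨ a j = 1 := by rw [hA] at haA; exact haA
    -- termwise nonneg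
    have hnn : ∀ j, 0 ≤ w j * a j - w j * m j := by
      intro j
      rcases ha01 j with h | h <;>
      · rw [hmval, hw]
        by_cases h1 : 0 < c j
        · simp [h, h1]
        · by_cases h2 : c j < 0 <;> simp [h, h1, h2]
    -- term i is at least 1
    have hti : 1 ≤ w i * a i - w i * m i := by
      rw [hmval, hw]
      by_cases h1 : 0 < c i
      · have hai : a i = 0 := by
          rcases ha01 i with h | h
          · exact h
          · exfalso; rw [h, hmval, if_pos h1] at hi; linarith
        simp [hai, h1]
      · by_cases h2 : c i < 0
        · have hai : a i = 1 := by
            rcases ha01 i with h | h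
            · exfalso; rw [h, hmval, if_neg h1] at hi; linarith
            · exact h
          simp [hai, h1, h2]
        · exfalso
          rw [hmval, if_neg h1] at hi
          push_neg at h1
          have : c i = 0 := le_antisymm h1 (not_lt.1 h2)
          rw [this] at hi; simp at hi
    have hsum : 1 ≤ ∑ j, (w j * a j - w j * m j) := by
      calc 1 ≤ w i * a i - w i * m i := hti
        _ ≤ ∑ j, (w j * a j - w j * m j) :=
          Finset.single_le_sum (fun j _ => hnn j) (Finset.mem_univ i)
    have : ∑ j, (w j * a j - w j * m j) = g a - g m := by
      rw [hg]; simp [Finset.sum_sub_distrib]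
    linarith [this ▸ hsum]
  -- extend to convex hull
  have hgconv : ∀ v ∈ convexHull ℝ (A \ F), g m + 1 ≤ g v := by
    intro v hv
    have := convexHull_min (s := A \ F)
      (t := {x : EuclideanSpace ℝ (Fin n) | g m + 1 ≤ ∑ i, w i * x i})
      (fun a ha => hgA a ha) (halfspace_convex w (g m + 1))
    exact this hv
  -- norm of w
  have hwnorm : ‖(WithLp.equiv 2 (Fin n → ℝ)).symm w‖ ≤ Real.sqrt n := by
    rw [EuclideanSpace.norm_eq]
    apply Real.sqrt_le_sqrt
    calc ∑ i, ‖((WithLp.equiv 2 (Fin n → ℝ)).symm w) i‖ ^ 2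
        ≤ ∑ _i : Fin n, (1:ℝ) := by
          apply Finset.sum_le_sum
          intro i _
          have : ((WithLp.equiv 2 (Fin n → ℝ)).symm w) i = w i := rfl
          rw [this, hw]
          by_cases h1 : 0 < c i
          · simp [h1]
          · by_cases h2 : c i < 0 <;> simp [h1, h2]
      _ = n := by simp
  intro u hu v hv
  have h1 : (1:ℝ) ≤ g v - g u := by
    have := hgconv v hv
    rw [hgF u hu]
    linarith
  have hinner : g v - g u = ⟪(WithLp.equiv 2 (Fin n → ℝ)).symm w, v - u⟫ := by
    rw [PiLp.inner_apply]
    simp only [RCLike.inner_apply, conj_trivial]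
    rw [hg]
    rw [← Finset.sum_sub_distrib]
    apply Finset.sum_congr rfl
    intro i _
    have h2 : (v - u) i = v i - u i := rfl
    have h3 : ((WithLp.equiv 2 (Fin n → ℝ)).symm w) i = w i := rfl
    rw [h2, h3]; ring
  have hcs : ⟪(WithLp.equiv 2 (Fin n → ℝ)).symm w, v - u⟫ ≤
      ‖(WithLp.equiv 2 (Fin n → ℝ)).symm w‖ * ‖v - u‖ := real_inner_le_norm _ _
  have hdist : dist u v = ‖v - u‖ := by rw [dist_eq_norm, norm_sub_rev]
  have hn0 : (0:ℝ) < Real.sqrt n ∨ Real.sqrt n = 0 := by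
    rcases Nat.eq_zero_or_pos n with h | h
    · right; simp [h]
    · left; positivity
  rcases hn0 with hpos | hzero
  · rw [div_le_iff₀ hpos, hdist]
    have : (1:ℝ) ≤ ‖(WithLp.equiv 2 (Fin n → ℝ)).symm w‖ * ‖v - u‖ := by
      calc (1:ℝ) ≤ g v - g u := h1
        _ = _ := hinner
        _ ≤ _ := hcs
    calc (1:ℝ) ≤ ‖(WithLp.equiv 2 (Fin n → ℝ)).symm w‖ * ‖v - u‖ := this
      _ ≤ Real.sqrt n * ‖v - u‖ := by
          apply mul_le_mul_of_nonneg_right hwnorm (norm_nonneg _)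
      _ = ‖v - u‖ * Real.sqrt n := mul_comm _ _
    -- rearrange: goal is 1 ≤ ‖v-u‖ * √n
  · rw [hzero]; simp [dist_nonneg]

/-- The pyramidal width of the hypercube vertex set `{0,1}ⁿ` is `1/√n`, using the
Peña–Rodríguez characterization as a minimum over proper faces. -/
theorem stmt16 {n : ℕ} (hn : 0 < n)
    (A C : Set (EuclideanSpace ℝ (Fin n)))
    (hA : A = {x | ∀ i, x i = 0 ∨ x i = 1})
    (hC : C = convexHull ℝ A) :
    sInf {r : ℝ | ∃ F : Set (EuclideanSpace ℝ (Fin n)),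
        IsExposed ℝ C F ∧ F.Nonempty ∧ F ≠ C ∧
        r = sInf {d : ℝ | ∃ u ∈ F, ∃ v ∈ convexHull ℝ (A \ F), d = dist u v}} =
      1 / Real.sqrt n := by
  have hnR : (0:ℝ) < n := by exact_mod_cast hn
  have hsq : (0:ℝ) < Real.sqrt n := Real.sqrt_pos.2 hnR
  have h0A : (0 : EuclideanSpace ℝ (Fin n)) ∈ A := by
    rw [hA]; intro i; left; rfl
  have h0C : (0 : EuclideanSpace ℝ (Fin n)) ∈ C := by
    rw [hC]; exact subset_convexHull ℝ A h0A
  -- the all-ones vector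
  set ones : EuclideanSpace ℝ (Fin n) := (WithLp.equiv 2 _).symm (fun _ => (1:ℝ)) with hones
  have honesA : ones ∈ A := by rw [hA]; intro i; right; rfl
  have honesne : ones ≠ 0 := by
    intro h
    have : ones ⟨0, hn⟩ = 0 := by rw [h]; rfl
    have h1 : ones ⟨0, hn⟩ = 1 := rfl
    rw [h1] at this; norm_num at this
  have hC01 : ∀ x ∈ C, ∀ i, 0 ≤ x i ∧ x i ≤ 1 := by
    rw [hC]; exact box_mem A hA
  -- the exposed face {0}
  set w0 : EuclideanSpace ℝ (Fin n) := (WithLp.equiv 2 _).symm (fun _ => (-1:ℝ)) with hw0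
  set l0 : EuclideanSpace ℝ (Fin n) →L[ℝ] ℝ := innerSL ℝ w0 with hl0
  have hl0x : ∀ x : EuclideanSpace ℝ (Fin n), l0 x = ∑ i, -(x i) := by
    intro x
    rw [hl0]
    simp only [innerSL_apply_apply, PiLp.inner_apply, RCLike.inner_apply, conj_trivial]
    apply Finset.sum_congr rfl
    intro i _
    have : w0 i = -1 := rfl
    rw [this]; ring
  have hexp : IsExposed ℝ C ({0} : Set (EuclideanSpace ℝ (Fin n))) := by
    intro _
    refine ⟨l0, ?_⟩
    ext x
    simp only [Set.mem_singleton_iff, Set.mem_setOf_eq]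
    constructor
    · rintro rfl
      refine ⟨h0C, fun y hy => ?_⟩
      rw [hl0x, hl0x]
      simp only [PiLp.zero_apply, neg_zero, Finset.sum_const_zero]
      apply Finset.sum_nonpos
      intro i _
      have := (hC01 y hy i).1
      linarith
    · rintro ⟨hxC, hmax⟩
      have h1 := hmax 0 h0C
      rw [hl0x, hl0x] at h1
      simp only [PiLp.zero_apply, neg_zero, Finset.sum_const_zero] at h1
      have h2 : ∑ i, x i = 0 := by
        have h3 : ∑ i, x i ≤ 0 := by
          have : -∑ i, x i ≥ 0 := by rw [← Finset.sum_neg_distrib]; linarith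
          linarith
        have h4 : 0 ≤ ∑ i, x i :=
          Finset.sum_nonneg (fun i _ => (hC01 x hxC i).1)
        linarith
      have h5 : ∀ i ∈ Finset.univ, x i = 0 :=
        (Finset.sum_eq_zero_iff_of_nonneg (fun i _ => (hC01 x hxC i).1)).1 h2
      ext i
      exact h5 i (Finset.mem_univ i)
  have hne0 : ({0} : Set (EuclideanSpace ℝ (Fin n))).Nonempty := ⟨0, rfl⟩
  have hFC0 : ({0} : Set (EuclideanSpace ℝ (Fin n))) ≠ C := by
    intro h
    have : ones ∈ ({0} : Set (EuclideanSpace ℝ (Fin n))) := by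
      rw [h, hC]; exact subset_convexHull ℝ A honesA
    exact honesne this
  -- key bound for arbitrary faces
  have hkey := fun (F : Set (EuclideanSpace ℝ (Fin n))) hF hne hFC =>
    key A C F hA hC hF hne hFC
  -- the center point
  set vstar : EuclideanSpace ℝ (Fin n) := (WithLp.equiv 2 _).symm (fun _ => 1/(n:ℝ)) with hvstar
  have hvmem : vstar ∈ convexHull ℝ (A \ ({0} : Set (EuclideanSpace ℝ (Fin n)))) := by
    have he : ∀ i : Fin n, EuclideanSpace.single i (1:ℝ) ∈ A \ ({0} : Set (EuclideanSpace ℝ (Fin n))) := by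
      intro i
      constructor
      · rw [hA]; intro j
        rw [EuclideanSpace.single_apply]
        split <;> simp
      · intro h
        have h1 : EuclideanSpace.single i (1:ℝ) i = 0 := by
          rw [Set.mem_singleton_iff] at h; rw [h]; rfl
        rw [EuclideanSpace.single_apply, if_pos rfl] at h1
        norm_num at h1
    have hc := Finset.centerMass_mem_convexHull (t := (Finset.univ : Finset (Fin n)))
      (w := fun _ => (1:ℝ)) (z := fun i => EuclideanSpace.single i (1:ℝ))
      (fun i _ => zero_le_one) (by simp [hnR]) (fun i _ => he i)
    have hcm : Finset.univ.centerMass (fun _ => (1:ℝ)) (fun i => EuclideanSpace.single i (1:ℝ)) = vstar := by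
      rw [Finset.centerMass]
      ext j
      simp only [Finset.sum_const, Finset.card_univ, Fintype.card_fin, nsmul_eq_mul, mul_one,
        one_smul]
      rw [PiLp.smul_apply, sum_apply']
      simp only [EuclideanSpace.single_apply]
      rw [Finset.sum_ite_eq Finset.univ j (fun _ => (1:ℝ))]
      simp only [Finset.mem_univ, if_true, smul_eq_mul]
      have : vstar j = 1/(n:ℝ) := rfl
      rw [this]
      ring
    rw [← hcm]
    exact hc
  have hvdist : dist (0 : EuclideanSpace ℝ (Fin n)) vstar = 1 / Real.sqrt n := by
    rw [dist_zero_left, EuclideanSpace.norm_eq]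
    have : ∀ i : Fin n, ‖vstar i‖ ^ 2 = (1/(n:ℝ))^2 := by
      intro i
      have : vstar i = 1/(n:ℝ) := rfl
      rw [this, Real.norm_eq_abs, sq_abs]
    rw [Finset.sum_congr rfl (fun i _ => this i)]
    rw [Finset.sum_const, Finset.card_univ, Fintype.card_fin, nsmul_eq_mul]
    have h1 : (n:ℝ) * (1/(n:ℝ))^2 = 1/(n:ℝ) := by field_simp
    rw [h1, one_div, one_div, Real.sqrt_inv]
  -- the distance set for {0}
  set D0 := {d : ℝ | ∃ u ∈ ({0} : Set (EuclideanSpace ℝ (Fin n))),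
      ∃ v ∈ convexHull ℝ (A \ ({0} : Set (EuclideanSpace ℝ (Fin n)))), d = dist u v} with hD0
  have hmemD0 : (1 / Real.sqrt n) ∈ D0 := ⟨0, rfl, vstar, hvmem, hvdist.symm⟩
  have hlbD0 : ∀ d ∈ D0, 1 / Real.sqrt n ≤ d := by
    rintro d ⟨u, hu, v, hv, rfl⟩
    exact (hkey _ hexp hne0 hFC0).2 u hu v hv
  have hD0inf : sInf D0 = 1 / Real.sqrt n :=
    le_antisymm (csInf_le ⟨1 / Real.sqrt n, hlbD0⟩ hmemD0) (le_csInf ⟨_, hmemD0⟩ hlbD0)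
  -- assembly
  set S := {r : ℝ | ∃ F : Set (EuclideanSpace ℝ (Fin n)),
      IsExposed ℝ C F ∧ F.Nonempty ∧ F ≠ C ∧
      r = sInf {d : ℝ | ∃ u ∈ F, ∃ v ∈ convexHull ℝ (A \ F), d = dist u v}} with hS
  have hmemS : (1 / Real.sqrt n) ∈ S := ⟨{0}, hexp, hne0, hFC0, hD0inf.symm⟩
  have hlbS : ∀ r ∈ S, 1 / Real.sqrt n ≤ r := by
    rintro r ⟨F, hF, hne, hFC, rfl⟩
    obtain ⟨⟨a, haAF⟩, hbd⟩ := hkey F hF hne hFC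
    obtain ⟨u0, hu0⟩ := hne
    have haconv : a ∈ convexHull ℝ (A \ F) := subset_convexHull ℝ _ haAF
    refine le_csInf ⟨dist u0 a, ⟨u0, hu0, a, haconv, rfl⟩⟩ ?_
    rintro d ⟨u, hu, v, hv, rfl⟩
    exact hbd u hu v hv
  exact le_antisymm (csInf_le ⟨1 / Real.sqrt n, hlbS⟩ hmemS) (le_csInf ⟨_, hmemS⟩ hlbS)
end
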